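/- arXiv:math/0603066 — 13 statements merged into one kernel-verified Lean document; each statement's English description precedes it below -/
import Mathlib

section
/- Let (g,B) be a quadratic Lie algebra over a field K of characteristic 0. Then g admits a symplectic structure ω if and only if there exists an invertible derivation D of g that is skew-symmetric with respect to B. Moreover, the correspondence can be taken to be ω(x,y) = B(Dx,y) for all x,y in g. -/
/-!
For an endomorphism `D` that is skew with respect to the invariant symmetric form `B`, the form
`ω = B (D ·) ·` satisfies
`ω ⁅x, y⁆ z + ω ⁅y, z⁆ x + ω ⁅z, x⁆ y = B (D ⁅x, y⁆ - ⁅D x, y⁆ - ⁅x, D y⁆) z`,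
so `ω` is a 2-cocycle exactly when `D` is a derivation. Skewness of `D` makes `ω` alternating
(as `2 ≠ 0`), and `ω` is nondegenerate exactly when `D` is invertible. Conversely, since `B` is
nondegenerate every bilinear form `ω` is `B (D ·) ·` for some `D`, and `ω` alternating makes `D`
skew.
-/

open LinearMap (BilinForm)

namespace LinearMap.BilinForm

section

variable {R M : Type*} [CommRing R] [AddCommGroup M] [Module R M] {B : BilinForm R M}
  {D : M →ₗ[R] M}

theorem apply_self_eq_zero_of_skew [IsAddTorsionFree R] (hBsymm : ∀ x y, B x y = B y x)
    (hskew : ∀ x y, B (D x) y = -B x (D y)) (x : M) : B (D x) x = 0 :=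
  self_eq_neg.mp <| (hskew x x).trans (by rw [hBsymm])

end

section

variable {K V : Type*} [Field K] [AddCommGroup V] [Module K V] [FiniteDimensional K V]
  {B : BilinForm K V}

theorem nondegenerate_comp_iff_bijective (hB : B.Nondegenerate) {D : V →ₗ[K] V} :
    (B ∘ₗ D).Nondegenerate ↔ Function.Bijective D := by
  refine ⟨fun h => ?_, fun hD => ⟨fun x hx => ?_, fun y hy => ?_⟩⟩
  · have hinj : Function.Injective D := by
      rw [← LinearMap.ker_eq_bot, LinearMap.ker_eq_bot']
      exact fun x hx => h.1 x fun y => by simp [hx]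
    exact ⟨hinj, LinearMap.injective_iff_surjective.mp hinj⟩
  · exact hD.injective (by simpa using hB.1 (D x) hx)
  · exact hB.2 y fun x => by obtain ⟨w, rfl⟩ := hD.surjective x; exact hy w

end

end LinearMap.BilinForm

section CommRing

variable {R L : Type*} [CommRing R] [LieRing L] [LieAlgebra R L]

def IsSymplectic (ω : BilinForm R L) : Prop :=
  ω.Nondegenerate ∧ (∀ x, ω x x = 0) ∧ ∀ x y z, ω ⁅x, y⁆ z + ω ⁅y, z⁆ x + ω ⁅z, x⁆ y = 0

variable {B : BilinForm R L} {D : L →ₗ[R] L}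

theorem cyclic_sum_apply_lie_eq (hBsymm : ∀ x y, B x y = B y x)
    (hBinv : ∀ x y z, B ⁅x, y⁆ z = B x ⁅y, z⁆) (hskew : ∀ x y, B (D x) y = -B x (D y))
    (x y z : L) :
    B (D ⁅x, y⁆) z + B (D ⁅y, z⁆) x + B (D ⁅z, x⁆) y =
      B (D ⁅x, y⁆ - ⁅D x, y⁆ - ⁅x, D y⁆) z := by
  have h₁ : B ⁅D x, y⁆ z = -B (D ⁅y, z⁆) x := by
    rw [hBinv, hskew, hBsymm]
  have h₂ : B ⁅x, D y⁆ z = -B (D ⁅z, x⁆) y := by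
    rw [← lie_skew, LinearMap.map_neg₂, hBinv, hskew, hBsymm, ← lie_skew, map_neg,
      LinearMap.map_neg₂, neg_neg]
  rw [map_sub, map_sub, LinearMap.sub_apply, LinearMap.sub_apply, h₁, h₂]
  ring

end CommRing

section Field

variable {K L : Type*} [Field K] [LieRing L] [LieAlgebra K L] [FiniteDimensional K L]
  {B : BilinForm K L}
variable (hB : B.Nondegenerate) (hBsymm : ∀ x y, B x y = B y x)
  (hBinv : ∀ x y z, B ⁅x, y⁆ z = B x ⁅y, z⁆)
include hB hBsymm hBinv

theorem isSymplectic_comp [CharZero K] {D : L →ₗ[K] L} (hD : Function.Bijective D)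
    (hder : ∀ x y, D ⁅x, y⁆ = ⁅D x, y⁆ + ⁅x, D y⁆) (hskew : ∀ x y, B (D x) y = -B x (D y)) :
    IsSymplectic (B ∘ₗ D) := by
  refine ⟨(B.nondegenerate_comp_iff_bijective hB).mpr hD,
    B.apply_self_eq_zero_of_skew hBsymm hskew, fun x y z => ?_⟩
  simp only [LinearMap.comp_apply]
  rw [cyclic_sum_apply_lie_eq hBsymm hBinv hskew, hder, sub_sub, sub_self, map_zero,
    LinearMap.zero_apply]

theorem exists_skew_derivation_of_isSymplectic {ω : BilinForm K L} (hω : IsSymplectic ω) :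
    ∃ D : L →ₗ[K] L, Function.Bijective D ∧ (∀ x y, D ⁅x, y⁆ = ⁅D x, y⁆ + ⁅x, D y⁆) ∧
      ∀ x y, B (D x) y = -B x (D y) := by
  obtain ⟨hnd, halt, hcocycle⟩ := hω
  set D := ω.symmCompOfNondegenerate B hB
  have hBD : ∀ x y, B (D x) y = ω x y := fun x y => ω.symmCompOfNondegenerate_left_apply hB y x
  have hskew : ∀ x y, B (D x) y = -B x (D y) := fun x y => by
    rw [hBsymm x, hBD, hBD, LinearMap.IsAlt.neg halt]
  refine ⟨D, (B.nondegenerate_comp_iff_bijective hB).mp ?_, fun x y => ?_, hskew⟩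
  · convert hnd
    ext x y
    exact hBD x y
  · have hdefect : D ⁅x, y⁆ - ⁅D x, y⁆ - ⁅x, D y⁆ = 0 := hB.1 _ fun z => by
      rw [← cyclic_sum_apply_lie_eq hBsymm hBinv hskew, hBD, hBD, hBD, hcocycle]
    rwa [sub_sub, sub_eq_zero] at hdefect

end Field

/-- A quadratic Lie algebra `(g, B)` over a field `K` of characteristic `0` admits a
symplectic structure `ω` if and only if there exists an invertible derivation `D` of `g`
that is skew-symmetric with respect to `B`; moreover the correspondence can be taken to be
`ω x y = B (D x) y`. -/
theorem stmt_0 (K : Type*) [Field K] [CharZero K]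
    (g : Type*) [LieRing g] [LieAlgebra K g] [Module.Finite K g]
    (B : LinearMap.BilinForm K g)
    (hBnd : B.Nondegenerate)
    (hBsymm : ∀ x y : g, B x y = B y x)
    (hBinv : ∀ x y z : g, B ⁅x, y⁆ z = B x ⁅y, z⁆) :
    ((∃ ω : LinearMap.BilinForm K g, ω.Nondegenerate ∧ (∀ x : g, ω x x = 0) ∧
        ∀ x y z : g, ω ⁅x, y⁆ z + ω ⁅y, z⁆ x + ω ⁅z, x⁆ y = 0) ↔
      (∃ D : g →ₗ[K] g, Function.Bijective D ∧
        (∀ x y : g, D ⁅x, y⁆ = ⁅D x, y⁆ + ⁅x, D y⁆) ∧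
        ∀ x y : g, B (D x) y = - B x (D y))) ∧
    (∀ D : g →ₗ[K] g, Function.Bijective D →
      (∀ x y : g, D ⁅x, y⁆ = ⁅D x, y⁆ + ⁅x, D y⁆) →
      (∀ x y : g, B (D x) y = - B x (D y)) →
      ∃ ω : LinearMap.BilinForm K g, (∀ x y : g, ω x y = B (D x) y) ∧
        ω.Nondegenerate ∧ (∀ x : g, ω x x = 0) ∧
        ∀ x y z : g, ω ⁅x, y⁆ z + ω ⁅y, z⁆ x + ω ⁅z, x⁆ y = 0) := by
  refine ⟨⟨fun ⟨ω, hω⟩ => exists_skew_derivation_of_isSymplectic hBnd hBsymm hBinv hω,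
    fun ⟨D, hD, hder, hskew⟩ => ⟨B ∘ₗ D, ?_⟩⟩, fun D hD hder hskew => ⟨B ∘ₗ D, fun _ _ => rfl, ?_⟩⟩ <;>
  exact isSymplectic_comp hBnd hBsymm hBinv hD hder hskew
end

section
/- Let g be a finite-dimensional Lie algebra over a field K of characteristic 0 and let D be an invertible derivation of g. Then the product x·y := D⁻¹[x, Dy] (for x,y in g) is left-symmetric, i.e. (x·y)·z − x·(y·z) = (y·x)·z − y·(x·z) for all x,y,z in g, it is Lie-admissible with commutator equal to the original bracket, i.e. x·y − y·x = [x,y] for all x,y in g, and D is also a derivation of this product, i.e. D(x·y) = (Dx)·y + x·(Dy) for all x,y in g. -/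
/-- If `D` is an invertible derivation of a finite-dimensional Lie algebra `g` over a field of
characteristic zero, then `x · y = D⁻¹ ⁅x, D y⁆` is a left-symmetric (Lie-admissible, with
commutator the original bracket) product on `g`, and `D` is a derivation of this product. -/
theorem stmt_1 (K : Type*) [Field K] [CharZero K]
    (g : Type*) [LieRing g] [LieAlgebra K g] [Module.Finite K g]
    (D : g ≃ₗ[K] g)
    (hD : ∀ x y : g, D ⁅x, y⁆ = ⁅D x, y⁆ + ⁅x, D y⁆)
    (mul : g → g → g)
    (hmul : ∀ x y : g, mul x y = D.symm ⁅x, D y⁆) :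
    (∀ x y z : g,
      mul (mul x y) z - mul x (mul y z) = mul (mul y x) z - mul y (mul x z)) ∧
    (∀ x y : g, mul x y - mul y x = ⁅x, y⁆) ∧
    (∀ x y : g, D (mul x y) = mul (D x) y + mul x (D y)) := by
  have key : ∀ x y : g, mul x y - mul y x = ⁅x, y⁆ := by
    intro x y
    rw [hmul, hmul, ← map_sub]
    have h1 : ⁅x, D y⁆ - ⁅y, D x⁆ = D ⁅x, y⁆ := by
      rw [hD x y]
      rw [show ⁅y, D x⁆ = -⁅D x, y⁆ from (lie_skew _ _).symm]
      abel
    rw [h1, D.symm_apply_apply]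
  refine ⟨?_, key, ?_⟩
  · intro x y z
    have hx : mul (mul x y) z - mul (mul y x) z = mul ⁅x, y⁆ z := by
      rw [hmul (mul x y), hmul (mul y x), hmul ⁅x, y⁆, ← map_sub, ← sub_lie, key]
    have hy : mul x (mul y z) - mul y (mul x z) = mul ⁅x, y⁆ z := by
      simp only [hmul, D.apply_symm_apply, ← map_sub, lie_lie]
    linear_combination (norm := module) hx - hy
  · intro x y
    rw [hmul x y, hmul (D x), hmul x, D.apply_symm_apply, ← map_add, ← hD x (D y),
      D.symm_apply_apply]
end

section
/- Let g be a finite-dimensional Lie algebra over a field K of characteristic 0, D an invertible derivation of g, and let x·y := D⁻¹[x, Dy] be the associated left-symmetric product. Then g admits an invariant scalar product (i.e. a nondegenerate symmetric invariant bilinear form B) if and only if there exists a nondegenerate symmetric bilinear form ⟨·,·⟩ on g such that ⟨x·y, z⟩ + ⟨y, x·z⟩ = 0 for all x,y,z in g (i.e. the product x·y is metric-compatible with ⟨·,·⟩; together with x·y − y·x = [x,y] this says that x·y is the Levi-Civita connection of ⟨·,·⟩). The correspondence can be taken to be ⟨x,y⟩ = B(Dx,Dy) for all x,y in g. -/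
/-!
Transporting a form along `D`, `⟨x, y⟩ = B (D x) (D y)`, is a bijection on bilinear forms that
preserves nondegeneracy and symmetry, and it turns the compatibility
`⟨x·y, z⟩ + ⟨y, x·z⟩ = 0` into `B ⁅x, D y⁆ (D z) + B (D y) ⁅x, D z⁆ = 0`. As `D` is onto, this
says that every `ad x` is skew for `B`, which for a bilinear form on a Lie ring is the same as
invariance.
-/

namespace LinearMap.BilinForm

variable {R L : Type*} [CommRing R] [LieRing L] [Module R L]

theorem lie_invariant_iff_ad_skew (B : LinearMap.BilinForm R L) :
    (∀ x y z : L, B ⁅x, y⁆ z = B x ⁅y, z⁆) ↔ ∀ x y z : L, B ⁅x, y⁆ z + B y ⁅x, z⁆ = 0 := by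
  refine ⟨fun hinv x y z => ?_, fun hskew x y z => ?_⟩
  · rw [← hinv y x z, ← lie_skew y x, map_neg, LinearMap.neg_apply, add_neg_cancel]
  · rw [← lie_skew x y, map_neg, LinearMap.neg_apply, neg_eq_iff_add_eq_zero, hskew]

theorem congr_symmetric_iff {M M' : Type*} [AddCommGroup M] [Module R M] [AddCommGroup M']
    [Module R M'] (B : LinearMap.BilinForm R M) (e : M ≃ₗ[R] M') :
    (∀ x y : M', congr e B x y = congr e B y x) ↔ ∀ x y : M, B x y = B y x := by
  simp only [congr_apply, e.symm.surjective.forall]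

theorem congr_symm_ad_compatible_iff (B : LinearMap.BilinForm R L) (D : L ≃ₗ[R] L) :
    (∀ x y z : L, congr D.symm B (D.symm ⁅x, D y⁆) z + congr D.symm B y (D.symm ⁅x, D z⁆) = 0) ↔
      ∀ x y z : L, B ⁅x, y⁆ z + B y ⁅x, z⁆ = 0 := by
  simp only [congr_apply, LinearEquiv.symm_symm, LinearEquiv.apply_symm_apply]
  exact forall_congr' fun x =>
    (D.surjective.forall₂ (p := fun y z => B ⁅x, y⁆ z + B y ⁅x, z⁆ = 0)).symm

theorem congr_symm_metric_compatible_iff_invariant (B : LinearMap.BilinForm R L)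
    (D : L ≃ₗ[R] L) :
    ((congr D.symm B).Nondegenerate ∧ (∀ x y : L, congr D.symm B x y = congr D.symm B y x) ∧
        ∀ x y z : L, congr D.symm B (D.symm ⁅x, D y⁆) z + congr D.symm B y (D.symm ⁅x, D z⁆) = 0) ↔
      B.Nondegenerate ∧ (∀ x y : L, B x y = B y x) ∧ ∀ x y z : L, B ⁅x, y⁆ z = B x ⁅y, z⁆ := by
  rw [nondegenerate_congr_iff, congr_symmetric_iff, congr_symm_ad_compatible_iff,
    lie_invariant_iff_ad_skew]

end LinearMap.BilinForm

theorem stmt_2_general (K : Type*) [Field K]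
    (g : Type*) [LieRing g] [LieAlgebra K g]
    (D : g ≃ₗ[K] g)
    (mul : g → g → g)
    (hmul : ∀ x y : g, mul x y = D.symm ⁅x, D y⁆) :
    ((∃ B : LinearMap.BilinForm K g, B.Nondegenerate ∧ (∀ x y : g, B x y = B y x) ∧
        ∀ x y z : g, B ⁅x, y⁆ z = B x ⁅y, z⁆) ↔
      (∃ m : LinearMap.BilinForm K g, m.Nondegenerate ∧ (∀ x y : g, m x y = m y x) ∧
        ∀ x y z : g, m (mul x y) z + m y (mul x z) = 0)) ∧
    (∀ B : LinearMap.BilinForm K g, B.Nondegenerate → (∀ x y : g, B x y = B y x) →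
      (∀ x y z : g, B ⁅x, y⁆ z = B x ⁅y, z⁆) →
      ∃ m : LinearMap.BilinForm K g, (∀ x y : g, m x y = B (D x) (D y)) ∧
        m.Nondegenerate ∧ (∀ x y : g, m x y = m y x) ∧
        ∀ x y z : g, m (mul x y) z + m y (mul x z) = 0) := by
  simp only [hmul]
  have transport (B : LinearMap.BilinForm K g) :=
    LinearMap.BilinForm.congr_symm_metric_compatible_iff_invariant B D
  refine ⟨⟨fun ⟨B, hB⟩ => ⟨_, (transport B).2 hB⟩, fun ⟨m, hm⟩ => ?_⟩,
    fun B hB hsym hinv =>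
      ⟨LinearMap.BilinForm.congr D.symm B, fun _ _ => rfl, (transport B).2 ⟨hB, hsym, hinv⟩⟩⟩
  obtain ⟨B, rfl⟩ := (LinearMap.BilinForm.congr D.symm).surjective m
  exact ⟨B, (transport B).1 hm⟩

/-- Let `D` be an invertible derivation of `g` and `x · y = D⁻¹ ⁅x, D y⁆` the associated
left-symmetric product.  Then `g` admits an invariant scalar product `B` if and only if there is
a nondegenerate symmetric bilinear form `⟨·,·⟩` with `⟨x·y, z⟩ + ⟨y, x·z⟩ = 0`; the
correspondence can be taken to be `⟨x, y⟩ = B (D x) (D y)`. -/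
theorem stmt_2 (K : Type*) [Field K] [CharZero K]
    (g : Type*) [LieRing g] [LieAlgebra K g] [Module.Finite K g]
    (D : g ≃ₗ[K] g)
    (hD : ∀ x y : g, D ⁅x, y⁆ = ⁅D x, y⁆ + ⁅x, D y⁆)
    (mul : g → g → g)
    (hmul : ∀ x y : g, mul x y = D.symm ⁅x, D y⁆) :
    ((∃ B : LinearMap.BilinForm K g, B.Nondegenerate ∧ (∀ x y : g, B x y = B y x) ∧
        ∀ x y z : g, B ⁅x, y⁆ z = B x ⁅y, z⁆) ↔
      (∃ m : LinearMap.BilinForm K g, m.Nondegenerate ∧ (∀ x y : g, m x y = m y x) ∧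
        ∀ x y z : g, m (mul x y) z + m y (mul x z) = 0)) ∧
    (∀ B : LinearMap.BilinForm K g, B.Nondegenerate → (∀ x y : g, B x y = B y x) →
      (∀ x y z : g, B ⁅x, y⁆ z = B x ⁅y, z⁆) →
      ∃ m : LinearMap.BilinForm K g, (∀ x y : g, m x y = B (D x) (D y)) ∧
        m.Nondegenerate ∧ (∀ x y : g, m x y = m y x) ∧
        ∀ x y z : g, m (mul x y) z + m y (mul x z) = 0) :=
  stmt_2_general K g D mul hmul
end

section
/- Let (g,B) be a quadratic Lie algebra over a field K of characteristic 0 and let D be an invertible derivation of g that is skew-symmetric with respect to B. Then R := D⁻¹ is skew-symmetric with respect to B and satisfies the classical Yang–Baxter equation: [Rx, Ry] − R[Rx, y] − R[x, Ry] = 0 for all x,y in g. -/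
/-- If `D` is an invertible derivation of a quadratic Lie algebra `(g, B)` which is
skew-symmetric with respect to `B`, then `R = D⁻¹` is skew-symmetric with respect to `B` and
satisfies the classical Yang–Baxter equation. -/
theorem stmt_3 (K : Type*) [Field K] [CharZero K]
    (g : Type*) [LieRing g] [LieAlgebra K g] [Module.Finite K g]
    (B : LinearMap.BilinForm K g)
    (hBnd : B.Nondegenerate)
    (hBsymm : ∀ x y : g, B x y = B y x)
    (hBinv : ∀ x y z : g, B ⁅x, y⁆ z = B x ⁅y, z⁆)
    (D : g ≃ₗ[K] g)
    (hDder : ∀ x y : g, D ⁅x, y⁆ = ⁅D x, y⁆ + ⁅x, D y⁆)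
    (hDskew : ∀ x y : g, B (D x) y = - B x (D y)) :
    (∀ x y : g, B (D.symm x) y = - B x (D.symm y)) ∧
    (∀ x y : g,
      ⁅D.symm x, D.symm y⁆ - D.symm ⁅D.symm x, y⁆ - D.symm ⁅x, D.symm y⁆ = 0) := by
  constructor
  · intro x y
    have h := hDskew (D.symm x) (D.symm y)
    rw [D.apply_symm_apply, D.apply_symm_apply] at h
    linear_combination h
  · intro x y
    have h := hDder (D.symm x) (D.symm y)
    rw [D.apply_symm_apply, D.apply_symm_apply] at h
    have h2 : ⁅D.symm x, D.symm y⁆ = D.symm (⁅x, D.symm y⁆ + ⁅D.symm x, y⁆) := by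
      apply D.injective; rw [h, D.apply_symm_apply]
    rw [h2, map_add]
    abel
end

section
/- Let g be the 4-dimensional real Lie algebra with basis {x₁, x₂, x₃, x₄} whose only nonzero brackets among basis elements are [x₁,x₂] = x₃ = −[x₂,x₁]. Then g admits no invariant scalar product (no nondegenerate symmetric bilinear form B with B([x,y],z) = B(x,[y,z]) for all x,y,z); however, the alternating bilinear form ω determined by ω(x₁,x₄) = ω(x₂,x₃) = 1 and ω(xᵢ,xⱼ) = 0 for all other pairs i < j is a symplectic structure on g, and the linear map D defined by D(x₁) = 2x₁, D(x₂) = −x₂, D(x₃) = x₃, D(x₄) = −2x₄ is a derivation of g that is skew-symmetric with respect to ω. -/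
/-!
Everything is read off in the coordinates of `b`: the bracket is
`⁅x, y⁆ = (x₀ y₁ - x₁ y₀) • b 2`, and the alternating form `ω` is forced to be the Darboux form
`x₀ y₃ + x₁ y₂ - x₂ y₁ - x₃ y₀`, whose nondegeneracy and closedness are then direct computations.
An invariant form `B` cannot be nondegenerate because the central commutator `b 2 = ⁅b 0, b 1⁆`
is `B`-orthogonal to everything: `B (b 2) z = B (b 0) ⁅b 1, z⁆` is a multiple of
`B (b 0) ⁅b 0, b 1⁆ = B ⁅b 0, b 0⁆ (b 1) = 0`.
A map that is diagonal in `b` with eigenvalues `c` is a derivation as soon as `c 0 + c 1 = c 2`,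
and is `ω`-skew as soon as `c 0 + c 3 = 0` and `c 1 + c 2 = 0`.
-/

section

open Module LinearMap.BilinForm

variable {R : Type*} [CommRing R]

theorem Module.Basis.repr_apply_of_apply_basis_eq_smul {M ι : Type*} [AddCommGroup M]
    [Module R M] (b : Basis ι R M) {D : M →ₗ[R] M} {c : ι → R}
    (hD : ∀ i, D (b i) = c i • b i) (x : M) (i : ι) :
    b.repr (D x) i = c i * b.repr x i := by
  have : b.coord i ∘ₗ D = c i • b.coord i := b.ext fun j => by
    by_cases hji : j = i <;> simp [hD, hji]
  exact LinearMap.congr_fun this x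

theorem LinearMap.BilinForm.ext_basis_of_isAlt {M ι : Type*} [AddCommGroup M] [Module R M]
    [LinearOrder ι] (b : Basis ι R M) {B B' : LinearMap.BilinForm R M} (hB : B.IsAlt)
    (hB' : B'.IsAlt) (h : ∀ i j, i < j → B (b i) (b j) = B' (b i) (b j)) : B = B' := by
  refine LinearMap.ext_basis b b fun i j => ?_
  rcases lt_trichotomy i j with hij | rfl | hji
  · exact h i j hij
  · rw [hB, hB']
  · rw [← LinearMap.IsAlt.neg hB, ← LinearMap.IsAlt.neg hB', h j i hji]

section DarbouxForm

variable {M : Type*} [AddCommGroup M] [Module R M] (b : Basis (Fin 4) R M)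

noncomputable def darbouxForm : LinearMap.BilinForm R M :=
  linMulLin (b.coord 0) (b.coord 3) + linMulLin (b.coord 1) (b.coord 2)
    - linMulLin (b.coord 2) (b.coord 1) - linMulLin (b.coord 3) (b.coord 0)

@[simp]
theorem darbouxForm_apply (x y : M) :
    darbouxForm b x y = b.repr x 0 * b.repr y 3 + b.repr x 1 * b.repr y 2
      - b.repr x 2 * b.repr y 1 - b.repr x 3 * b.repr y 0 := by
  simp [darbouxForm]

theorem isAlt_darbouxForm : (darbouxForm b).IsAlt := fun x => by
  rw [darbouxForm_apply]
  ring

theorem eq_darbouxForm {ω : LinearMap.BilinForm R M} (hω : ω.IsAlt)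
    (h03 : ω (b 0) (b 3) = 1) (h12 : ω (b 1) (b 2) = 1)
    (h01 : ω (b 0) (b 1) = 0) (h02 : ω (b 0) (b 2) = 0)
    (h13 : ω (b 1) (b 3) = 0) (h23 : ω (b 2) (b 3) = 0) : ω = darbouxForm b := by
  refine ext_basis_of_isAlt b hω (isAlt_darbouxForm b) fun i j hij => ?_
  fin_cases i <;> fin_cases j <;> simp_all

theorem nondegenerate_darbouxForm : (darbouxForm b).Nondegenerate := by
  refine (isAlt_darbouxForm b).isRefl.nondegenerate_iff_separatingLeft.mpr fun x hx => ?_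
  refine b.forall_coord_eq_zero_iff.mp fun i => ?_
  have := hx (b (3 - i))
  fin_cases i <;> simpa using this

theorem darbouxForm_apply_eq_neg {D : M →ₗ[R] M} {c : Fin 4 → R}
    (hD : ∀ i, D (b i) = c i • b i) (hc03 : c 0 + c 3 = 0) (hc12 : c 1 + c 2 = 0) (x y : M) :
    darbouxForm b (D x) y = - darbouxForm b x (D y) := by
  simp only [darbouxForm_apply, b.repr_apply_of_apply_basis_eq_smul hD]
  rw [eq_neg_of_add_eq_zero_right hc03, eq_neg_of_add_eq_zero_right hc12]
  ring

end DarbouxForm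

section LieAlgebra

variable {L : Type*} [LieRing L] [LieAlgebra R L] (b : Basis (Fin 4) R L)

theorem lie_eq_repr_smul (h01 : ⁅b 0, b 1⁆ = b 2)
    (hrest : ∀ i j : Fin 4, ¬(i = 0 ∧ j = 1) → ¬(i = 1 ∧ j = 0) → ⁅b i, b j⁆ = 0) (x y : L) :
    ⁅x, y⁆ = (b.repr x 0 * b.repr y 1 - b.repr x 1 * b.repr y 0) • b 2 := by
  have h10 : ⁅b 1, b 0⁆ = -b 2 := by rw [← lie_skew, h01]
  have : (LieModule.toEnd R L L : L →ₗ[R] L →ₗ[R] L) =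
      (linMulLin (b.coord 0) (b.coord 1) - linMulLin (b.coord 1) (b.coord 0)).compr₂
        (LinearMap.toSpanSingleton R L (b 2)) :=
    LinearMap.ext_basis b b fun i j => by
      fin_cases i <;> fin_cases j <;> simp [h01, h10, hrest]
  simpa using LinearMap.congr_fun₂ this x y

variable {b}

theorem not_nondegenerate_of_invariant [Nontrivial R]
    (hlie : ∀ x y : L, ⁅x, y⁆ = (b.repr x 0 * b.repr y 1 - b.repr x 1 * b.repr y 0) • b 2)
    {B : LinearMap.BilinForm R L}
    (hinv : ∀ x y z : L, B ⁅x, y⁆ z = B x ⁅y, z⁆) : ¬ B.Nondegenerate := by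
  have h01 : ⁅b 0, b 1⁆ = b 2 := by simp [hlie]
  have hperp : ∀ z, B (b 2) z = 0 := fun z => calc
    B (b 2) z = B (b 0) ⁅b 1, z⁆ := by rw [← hinv, h01]
    _ = -b.repr z 0 * B (b 0) ⁅b 0, b 1⁆ := by rw [hlie (b 1), h01]; simp
    _ = -b.repr z 0 * B ⁅b 0, b 0⁆ (b 1) := by rw [hinv]
    _ = 0 := by simp
  exact fun hB => b.ne_zero 2 (hB.1 _ hperp)

theorem darbouxForm_lie_cyclic
    (hlie : ∀ x y : L, ⁅x, y⁆ = (b.repr x 0 * b.repr y 1 - b.repr x 1 * b.repr y 0) • b 2)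
    (x y z : L) :
    darbouxForm b ⁅x, y⁆ z + darbouxForm b ⁅y, z⁆ x + darbouxForm b ⁅z, x⁆ y = 0 := by
  have hb2 : ∀ w, darbouxForm b (b 2) w = -b.repr w 1 := by simp
  simp only [hlie, map_smul, LinearMap.smul_apply, hb2, smul_eq_mul]
  ring

theorem apply_lie_of_apply_basis_eq_smul
    (hlie : ∀ x y : L, ⁅x, y⁆ = (b.repr x 0 * b.repr y 1 - b.repr x 1 * b.repr y 0) • b 2)
    {D : L →ₗ[R] L} {c : Fin 4 → R}
    (hD : ∀ i, D (b i) = c i • b i) (hc : c 0 + c 1 = c 2) (x y : L) :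
    D ⁅x, y⁆ = ⁅D x, y⁆ + ⁅x, D y⁆ := by
  simp only [hlie, map_smul, hD, b.repr_apply_of_apply_basis_eq_smul hD, ← hc]
  module

end LieAlgebra

end

/-- The 4-dimensional real Lie algebra with basis `x₁, x₂, x₃, x₄` and only nonzero bracket
`⁅x₁, x₂⁆ = x₃` admits no invariant scalar product; however the alternating form `ω` with
`ω x₁ x₄ = ω x₂ x₃ = 1` (and all other values on pairs of basis vectors zero) is a symplectic
structure, and the map `D` with `D x₁ = 2 x₁`, `D x₂ = -x₂`, `D x₃ = x₃`, `D x₄ = -2 x₄` is a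
derivation which is skew-symmetric with respect to `ω`. -/
theorem stmt_4 (g : Type*) [LieRing g] [LieAlgebra ℝ g]
    (b : Module.Basis (Fin 4) ℝ g)
    (h01 : ⁅b 0, b 1⁆ = b 2)
    (hrest : ∀ i j : Fin 4, ¬(i = 0 ∧ j = 1) → ¬(i = 1 ∧ j = 0) → ⁅b i, b j⁆ = 0) :
    (¬ ∃ B : LinearMap.BilinForm ℝ g, B.Nondegenerate ∧ (∀ x y : g, B x y = B y x) ∧
        ∀ x y z : g, B ⁅x, y⁆ z = B x ⁅y, z⁆) ∧
    (∀ ω : LinearMap.BilinForm ℝ g, (∀ x : g, ω x x = 0) →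
      ω (b 0) (b 3) = 1 → ω (b 1) (b 2) = 1 →
      ω (b 0) (b 1) = 0 → ω (b 0) (b 2) = 0 → ω (b 1) (b 3) = 0 → ω (b 2) (b 3) = 0 →
      (ω.Nondegenerate ∧
        ∀ x y z : g, ω ⁅x, y⁆ z + ω ⁅y, z⁆ x + ω ⁅z, x⁆ y = 0)) ∧
    (∀ D : g →ₗ[ℝ] g,
      D (b 0) = (2 : ℝ) • b 0 → D (b 1) = - b 1 → D (b 2) = b 2 → D (b 3) = (-2 : ℝ) • b 3 →
      ((∀ x y : g, D ⁅x, y⁆ = ⁅D x, y⁆ + ⁅x, D y⁆) ∧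
        ∀ ω : LinearMap.BilinForm ℝ g, (∀ x : g, ω x x = 0) →
          ω (b 0) (b 3) = 1 → ω (b 1) (b 2) = 1 →
          ω (b 0) (b 1) = 0 → ω (b 0) (b 2) = 0 → ω (b 1) (b 3) = 0 → ω (b 2) (b 3) = 0 →
          ∀ x y : g, ω (D x) y = - ω x (D y))) := by
  have hlie := lie_eq_repr_smul b h01 hrest
  refine ⟨fun ⟨B, hB, _, hinv⟩ => not_nondegenerate_of_invariant hlie hinv hB, ?_, ?_⟩
  · intro ω hω h03 h12 hω01 hω02 hω13 hω23
    obtain rfl := eq_darbouxForm b hω h03 h12 hω01 hω02 hω13 hω23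
    exact ⟨nondegenerate_darbouxForm b, darbouxForm_lie_cyclic hlie⟩
  · intro D hD0 hD1 hD2 hD3
    have hD : ∀ i, D (b i) = (![2, -1, 1, -2] : Fin 4 → ℝ) i • b i := by
      intro i
      fin_cases i <;> simp [hD0, hD1, hD2, hD3]
    refine ⟨apply_lie_of_apply_basis_eq_smul hlie hD (by simp only [Matrix.cons_val]; norm_num),
      ?_⟩
    intro ω hω h03 h12 hω01 hω02 hω13 hω23
    obtain rfl := eq_darbouxForm b hω h03 h12 hω01 hω02 hω13 hω23
    exact darbouxForm_apply_eq_neg b hD (by simp) (by simp)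
end

section
/- Let a be a finite-dimensional Lie algebra over a field K of characteristic 0 admitting an invertible derivation D, and let θ be a cyclic 2-cocycle on a with values in a*. Define Θ(x,y,z) = θ(Dx,y)(z) + θ(Dy,z)(x) + θ(Dz,x)(y) for x,y,z in a. If there exists an alternating bilinear form F : a × a → K such that Θ(x,y,z) = −F([x,y],z) + F(x,[y,z]) − F(y,[x,z]) for all x,y,z in a (i.e. Θ is a 3-coboundary for the scalar cohomology of a), then the quadratic Lie algebra (T*_θ a, B_θ) admits a symplectic structure. -/
/-!
The symplectic form is `ω(x + f, y + g) = f(D y) - g(D x) + F(x, y)`. It is nondegenerate because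
`D` is invertible and alternating because `F` is. In the cyclic sum of `ω([p, q], r)` the terms
in `a*` cancel since `D` is a derivation, the `θ`-terms add up to `Θ(x, y, z)` by cyclicity of
`θ`, and the `F`-terms add up to `-Θ(x, y, z)` by the coboundary hypothesis.
-/

namespace TStarExtension

open LinearMap (BilinForm)

section Form

variable {K M : Type*} [CommRing K] [AddCommGroup M] [Module K M]

def symplecticForm (D : M →ₗ[K] M) (F : BilinForm K M) : BilinForm K (M × Module.Dual K M) :=
  LinearMap.mk₂ K (fun p q => p.2 (D q.1) - q.2 (D p.1) + F p.1 q.1)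
    (fun p p' q => by simp only [Prod.fst_add, Prod.snd_add, map_add, LinearMap.add_apply]; ring)
    (fun c p q => by
      simp only [Prod.smul_fst, Prod.smul_snd, map_smul, LinearMap.smul_apply, smul_eq_mul]; ring)
    (fun p q q' => by simp only [Prod.fst_add, Prod.snd_add, map_add, LinearMap.add_apply]; ring)
    (fun c p q => by
      simp only [Prod.smul_fst, Prod.smul_snd, map_smul, LinearMap.smul_apply, smul_eq_mul]; ring)

@[simp]
theorem symplecticForm_apply (D : M →ₗ[K] M) (F : BilinForm K M) (p q : M × Module.Dual K M) :
    symplecticForm D F p q = p.2 (D q.1) - q.2 (D p.1) + F p.1 q.1 :=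
  rfl

theorem isAlt_symplecticForm (D : M →ₗ[K] M) {F : BilinForm K M} (hF : F.IsAlt) :
    (symplecticForm D F).IsAlt := fun p => by
  simp [hF.self_eq_zero]

theorem nondegenerate_symplecticForm [Module.Projective K M] (D : M ≃ₗ[K] M)
    {F : BilinForm K M} (hF : F.IsAlt) : (symplecticForm (D : M →ₗ[K] M) F).Nondegenerate := by
  refine (isAlt_symplecticForm _ hF).isRefl.nondegenerate_iff_separatingLeft.mpr ?_
  rintro ⟨x, f⟩ hxf
  have hx : x = 0 := by
    have hDx : ∀ g : Module.Dual K M, g (D x) = 0 := fun g => by simpa using hxf (0, g)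
    simpa using (Module.forall_dual_apply_eq_zero_iff K (D x)).mp hDx
  subst hx
  have hf : f = 0 := by
    ext y
    obtain ⟨z, rfl⟩ := D.surjective y
    simpa using hxf (z, 0)
  rw [hf, Prod.mk_zero_zero]

end Form

section Bracket

variable {K a : Type*} [CommRing K] [LieRing a] [LieAlgebra K a]

def bracket (θ : a →ₗ[K] a →ₗ[K] Module.Dual K a) (p q : a × Module.Dual K a) :
    a × Module.Dual K a :=
  (⁅p.1, q.1⁆, θ p.1 q.1 + p.2 ∘ₗ (LieAlgebra.ad K a q.1 : a →ₗ[K] a)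
    - q.2 ∘ₗ (LieAlgebra.ad K a p.1 : a →ₗ[K] a))

theorem symplecticForm_cyclic_bracket {D : a →ₗ[K] a}
    (hD : ∀ x y : a, D ⁅x, y⁆ = ⁅D x, y⁆ + ⁅x, D y⁆)
    {θ : a →ₗ[K] a →ₗ[K] Module.Dual K a} (hθcyc : ∀ x y z : a, θ x y z = θ y z x)
    {F : BilinForm K a} (hF : F.IsAlt)
    (hΘ : ∀ x y z : a, θ (D x) y z + θ (D y) z x + θ (D z) x y =
      - F ⁅x, y⁆ z + F x ⁅y, z⁆ - F y ⁅x, z⁆)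
    (p q r : a × Module.Dual K a) :
    symplecticForm D F (bracket θ p q) r + symplecticForm D F (bracket θ q r) p
      + symplecticForm D F (bracket θ r p) q = 0 := by
  obtain ⟨x, f⟩ := p
  obtain ⟨y, g⟩ := q
  obtain ⟨z, h⟩ := r
  have hder : ∀ (φ : Module.Dual K a) (u v : a), φ (D ⁅u, v⁆) = φ ⁅u, D v⁆ - φ ⁅v, D u⁆ :=
    fun φ u v => by rw [hD, ← lie_skew (D u) v, map_add, map_neg, neg_add_eq_sub]
  have hskew : ∀ u v : a, F u v = - F v u := fun u v => (hF.neg_eq v u).symm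
  have hFlie : F ⁅z, x⁆ y = - F ⁅x, z⁆ y := by
    rw [← lie_skew x z, map_neg, LinearMap.neg_apply, neg_neg]
  simp only [bracket, symplecticForm_apply, LinearMap.sub_apply, LinearMap.add_apply,
    LinearMap.comp_apply, LieAlgebra.ad_apply]
  linear_combination hΘ x y z - hder h x y - hder f y z - hder g z x
    - hθcyc (D x) y z - hθcyc (D y) z x - hθcyc (D z) x y
    + hskew x ⁅y, z⁆ - hskew y ⁅x, z⁆ + hFlie

end Bracket

end TStarExtension

open TStarExtension in
theorem stmt_5_general (K : Type*) [Field K]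
    (a : Type*) [LieRing a] [LieAlgebra K a]
    (D : a ≃ₗ[K] a)
    (hD : ∀ x y : a, D ⁅x, y⁆ = ⁅D x, y⁆ + ⁅x, D y⁆)
    (θ : a →ₗ[K] a →ₗ[K] Module.Dual K a)
    (hθcyc : ∀ x y z : a, θ x y z = θ y z x)
    (br : a × Module.Dual K a → a × Module.Dual K a → a × Module.Dual K a)
    (hbr : ∀ p q : a × Module.Dual K a, br p q =
      (⁅p.1, q.1⁆, θ p.1 q.1 + p.2 ∘ₗ (LieAlgebra.ad K a q.1 : a →ₗ[K] a)
        - q.2 ∘ₗ (LieAlgebra.ad K a p.1 : a →ₗ[K] a)))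
    (F : LinearMap.BilinForm K a)
    (hFalt : ∀ x : a, F x x = 0)
    (hΘ : ∀ x y z : a, θ (D x) y z + θ (D y) z x + θ (D z) x y =
      - F ⁅x, y⁆ z + F x ⁅y, z⁆ - F y ⁅x, z⁆) :
    ∃ ω : LinearMap.BilinForm K (a × Module.Dual K a),
      ω.Nondegenerate ∧ (∀ p : a × Module.Dual K a, ω p p = 0) ∧
      ∀ p q r : a × Module.Dual K a,
        ω (br p q) r + ω (br q r) p + ω (br r p) q = 0 := by
  obtain rfl : br = bracket θ := funext₂ hbr
  exact ⟨symplecticForm (D : a →ₗ[K] a) F, nondegenerate_symplecticForm D hFalt,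
    isAlt_symplecticForm _ hFalt, symplecticForm_cyclic_bracket hD hθcyc hFalt hΘ⟩

/-- Let `a` be a Lie algebra with an invertible derivation `D` and `θ` a cyclic 2-cocycle with
values in `a*` (so that the `T*`-extension bracket `br` on `a × a*` satisfies the Jacobi
identity).  If `Θ(x,y,z) = θ(Dx,y)(z) + θ(Dy,z)(x) + θ(Dz,x)(y)` is a scalar 3-coboundary,
then the quadratic Lie algebra `T*_θ a` admits a symplectic structure. -/
theorem stmt_5 (K : Type*) [Field K] [CharZero K]
    (a : Type*) [LieRing a] [LieAlgebra K a] [Module.Finite K a]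
    (D : a ≃ₗ[K] a)
    (hD : ∀ x y : a, D ⁅x, y⁆ = ⁅D x, y⁆ + ⁅x, D y⁆)
    (θ : a →ₗ[K] a →ₗ[K] Module.Dual K a)
    (hθalt : ∀ x : a, θ x x = 0)
    (hθcyc : ∀ x y z : a, θ x y z = θ y z x)
    (br : a × Module.Dual K a → a × Module.Dual K a → a × Module.Dual K a)
    (hbr : ∀ p q : a × Module.Dual K a, br p q =
      (⁅p.1, q.1⁆, θ p.1 q.1 + p.2 ∘ₗ (LieAlgebra.ad K a q.1 : a →ₗ[K] a)
        - q.2 ∘ₗ (LieAlgebra.ad K a p.1 : a →ₗ[K] a)))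
    (hJac : ∀ p q r : a × Module.Dual K a,
      br (br p q) r + br (br q r) p + br (br r p) q = 0)
    (F : LinearMap.BilinForm K a)
    (hFalt : ∀ x : a, F x x = 0)
    (hΘ : ∀ x y z : a, θ (D x) y z + θ (D y) z x + θ (D z) x y =
      - F ⁅x, y⁆ z + F x ⁅y, z⁆ - F y ⁅x, z⁆) :
    ∃ ω : LinearMap.BilinForm K (a × Module.Dual K a),
      ω.Nondegenerate ∧ (∀ p : a × Module.Dual K a, ω p p = 0) ∧
      ∀ p q r : a × Module.Dual K a,
        ω (br p q) r + ω (br q r) p + ω (br r p) q = 0 :=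
  stmt_5_general K a D hD θ hθcyc br hbr F hFalt hΘ
end

section
/- Let K be a field of characteristic zero and let a be a finite-dimensional Lie algebra over K. Then a admits an invertible derivation if and only if there exist a quadratic symplectic Lie algebra (g,B,ω) over K and an ideal I of g such that B(I,I) = {0} (I is completely isotropic for B), I = {x ∈ g : ω(x,u) = 0 for all u ∈ I} (I is lagrangian for ω), and a is isomorphic as a Lie algebra to the quotient g/I. -/
/-!
If `D` is an invertible derivation of `a`, the T*-extension `a ⋉ a*` carries the hyperbolic
invariant scalar product `B((x, f), (y, g)) = f y + g x` and the symplectic form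
`ω((x, f), (y, g)) = f (D y) - g (D x)`: the cocycle identity for `ω` is the Leibniz rule for `D`,
and the ideal `a*` is isotropic for `B`, lagrangian for `ω`, with quotient `a`.

Conversely, `ω(x, y) = B(D x, y)` defines an invertible endomorphism `D` of `g`, and the cocycle
identity together with the invariance of `B` says that `D` is a derivation. If `I` is isotropic for
`B` and lagrangian for `ω`, then `I = (D I)^⊥`; a dimension count gives `I = I^⊥`, hence `D I = I`,
and `D` descends to an invertible derivation of `g ⧸ I`.
-/

open LieModule.Cohomology
open LinearMap (BilinForm)

universe u v

namespace LieAlgebra.ofTwoCocycle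

variable {R L M : Type*} [CommRing R] [LieRing L] [LieAlgebra R L]
  [AddCommGroup M] [Module R M] [LieRingModule L M] [LieModule R L M]

@[simp] lemma carrier_add {c : twoCocycle R L M} (p q : ofTwoCocycle c) :
    (p + q).carrier = p.carrier + q.carrier := rfl

@[simp] lemma carrier_smul {c : twoCocycle R L M} (t : R) (p : ofTwoCocycle c) :
    (t • p).carrier = t • p.carrier := rfl

@[simp] lemma carrier_lie_zero (p q : ofTwoCocycle (0 : twoCocycle R L M)) :
    ⁅p, q⁆.carrier = (⁅p.carrier.1, q.carrier.1⁆,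
      ⁅p.carrier.1, q.carrier.2⁆ - ⁅q.carrier.1, p.carrier.2⁆) := by
  simp [bracket_ofTwoCocycle, ofProd]

variable (c : twoCocycle R L M)

def proj : ofTwoCocycle c →ₗ⁅R⁆ L where
  toFun p := p.carrier.1
  map_add' _ _ := rfl
  map_smul' _ _ := rfl
  map_lie' := by simp [bracket_ofTwoCocycle, ofProd]

lemma proj_surjective : Function.Surjective (proj c) := fun x => ⟨⟨(x, 0)⟩, rfl⟩

def toProd : ofTwoCocycle c ≃ₗ[R] L × M := (ofProd c).symm.linearEquiv R

@[simp] lemma toProd_apply (p : ofTwoCocycle c) : toProd c p = p.carrier := rfl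

instance [Module.Finite R L] [Module.Finite R M] : Module.Finite R (ofTwoCocycle c) :=
  Module.Finite.equiv (toProd c).symm

end LieAlgebra.ofTwoCocycle

noncomputable def LieHom.quotKerEquivOfSurjective {R L L' : Type*} [CommRing R] [LieRing L]
    [LieAlgebra R L] [LieRing L'] [LieAlgebra R L'] (f : L →ₗ⁅R⁆ L')
    (hf : Function.Surjective f) : (L ⧸ f.ker) ≃ₗ⁅R⁆ L' :=
  (f.quotKerEquivRange.trans (LieEquiv.ofEq _ _ (congrArg _ (f.range_eq_top.mpr hf)))).trans
    LieSubalgebra.topEquiv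

section TStar

variable (R L : Type*) [CommRing R] [LieRing L] [LieAlgebra R L]

/-- The zero 2-cocycle gives the semidirect product `L ⋉ L*` for the coadjoint action. -/
abbrev TStar := LieAlgebra.ofTwoCocycle (0 : twoCocycle R L (Module.Dual R L))

namespace TStar

open LieAlgebra.ofTwoCocycle

def equivDualProd : TStar R L ≃ₗ[R] Module.Dual R L × L :=
  LieAlgebra.ofTwoCocycle.toProd _ ≪≫ₗ LinearEquiv.prodComm R _ _

def hyperbolicForm : BilinForm R (TStar R L) :=
  BilinForm.congr (equivDualProd R L).symm (LinearMap.dualProd R L)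

variable {R L}

@[simp] lemma hyperbolicForm_apply (p q : TStar R L) :
    hyperbolicForm R L p q = p.carrier.2 q.carrier.1 + q.carrier.2 p.carrier.1 := by
  simp [hyperbolicForm, equivDualProd, add_comm]

lemma hyperbolicForm_isSymm : (hyperbolicForm R L).IsSymm :=
  ⟨fun _ _ => add_comm _ _⟩

lemma hyperbolicForm_nondegenerate [Module.Projective R L] :
    (hyperbolicForm R L).Nondegenerate :=
  BilinForm.Nondegenerate.congr _ <|
    (LinearMap.isSymm_dualProd R L).isRefl.nondegenerate_iff_separatingLeft.mpr
      ((LinearMap.separatingLeft_dualProd R L).mpr (Module.eval_apply_injective R))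

lemma hyperbolicForm_lie (p q r : TStar R L) :
    hyperbolicForm R L ⁅p, q⁆ r = hyperbolicForm R L p ⁅q, r⁆ := by
  simp only [hyperbolicForm_apply, carrier_lie_zero, LinearMap.sub_apply, Module.Dual.lie_apply]
  rw [← lie_skew q.carrier.1 p.carrier.1, ← lie_skew r.carrier.1 p.carrier.1]
  simp only [map_neg]
  ring

variable (D : L →ₗ[R] L)

def derivationForm : BilinForm R (TStar R L) :=
  LinearMap.mk₂ R (fun p q => p.carrier.2 (D q.carrier.1) - q.carrier.2 (D p.carrier.1))
    (fun _ _ _ => by simp; ring) (fun _ _ _ => by simp; ring)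
    (fun _ _ _ => by simp; ring) (fun _ _ _ => by simp; ring)

@[simp] lemma derivationForm_apply (p q : TStar R L) :
    derivationForm D p q = p.carrier.2 (D q.carrier.1) - q.carrier.2 (D p.carrier.1) := rfl

lemma derivationForm_isAlt : (derivationForm D).IsAlt := fun _ => sub_self _

lemma derivationForm_cyclic (hD : ∀ x y : L, D ⁅x, y⁆ = ⁅D x, y⁆ + ⁅x, D y⁆)
    (p q r : TStar R L) :
    derivationForm D ⁅p, q⁆ r + derivationForm D ⁅q, r⁆ p + derivationForm D ⁅r, p⁆ q = 0 := by
  simp only [derivationForm_apply, carrier_lie_zero, LinearMap.sub_apply, Module.Dual.lie_apply,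
    hD, map_add]
  rw [← lie_skew (D p.carrier.1) q.carrier.1, ← lie_skew (D q.carrier.1) r.carrier.1,
    ← lie_skew (D r.carrier.1) p.carrier.1]
  simp only [map_neg]
  ring

lemma mem_ker_proj {p : TStar R L} : p ∈ (proj _).ker ↔ p.carrier.1 = 0 := LieHom.mem_ker

lemma hyperbolicForm_eq_zero_of_mem_ker {p q : TStar R L} (hp : p ∈ (proj _).ker)
    (hq : q ∈ (proj _).ker) : hyperbolicForm R L p q = 0 := by
  simp [mem_ker_proj.mp hp, mem_ker_proj.mp hq]

variable [Module.Projective R L] {D}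

lemma apply_fst_eq_zero_of_forall_derivationForm {p : TStar R L}
    (h : ∀ f : Module.Dual R L, derivationForm D p ⟨(0, f)⟩ = 0) : D p.carrier.1 = 0 := by
  refine (Module.forall_dual_apply_eq_zero_iff R _).mp fun f => ?_
  simpa using h f

lemma derivationForm_nondegenerate (hD : Function.Bijective D) :
    (derivationForm D).Nondegenerate := by
  refine (derivationForm_isAlt D).isRefl.nondegenerate_iff_separatingLeft.mpr fun p hp => ?_
  obtain ⟨⟨x, f⟩⟩ := p
  have hx : x = 0 := hD.injective <| by
    simpa using apply_fst_eq_zero_of_forall_derivationForm fun f => hp _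
  have hf : f = 0 := LinearMap.ext fun y => by
    obtain ⟨z, rfl⟩ := hD.surjective y
    simpa [hx] using hp ⟨(z, 0)⟩
  subst hx hf
  rfl

lemma mem_ker_proj_iff_forall_derivationForm (hD : Function.Injective D) (p : TStar R L) :
    p ∈ (proj _).ker ↔ ∀ u ∈ (proj _).ker, derivationForm D p u = 0 := by
  refine ⟨fun hp u hu => by simp [mem_ker_proj.mp hp, mem_ker_proj.mp hu], fun h => ?_⟩
  refine mem_ker_proj.mpr (hD ?_)
  simpa using apply_fst_eq_zero_of_forall_derivationForm fun f => h _ (mem_ker_proj.mpr rfl)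

end TStar

end TStar

section Derivation

variable (R L : Type*) [CommRing R] [LieRing L] [LieAlgebra R L]

def HasBijectiveDerivation : Prop :=
  ∃ D : L →ₗ[R] L, Function.Bijective D ∧ ∀ x y : L, D ⁅x, y⁆ = ⁅D x, y⁆ + ⁅x, D y⁆

variable {R L}

lemma HasBijectiveDerivation.of_lieEquiv {L' : Type*} [LieRing L'] [LieAlgebra R L']
    (h : HasBijectiveDerivation R L') (e : L ≃ₗ⁅R⁆ L') : HasBijectiveDerivation R L := by
  obtain ⟨D, hD, hder⟩ := h
  refine ⟨e.symm.toLinearEquiv.toLinearMap ∘ₗ D ∘ₗ e.toLinearEquiv.toLinearMap,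
    e.symm.bijective.comp (hD.comp e.bijective), fun x y => ?_⟩
  simp only [LinearMap.coe_comp, LinearEquiv.coe_coe, Function.comp_apply,
    LieEquiv.coe_toLinearEquiv]
  rw [e.map_lie, hder, map_add, e.symm.map_lie, e.symm.map_lie, e.symm_apply_apply,
    e.symm_apply_apply]

lemma HasBijectiveDerivation.quotient {K : Type*} [Field K] [LieAlgebra K L]
    [FiniteDimensional K L] (I : LieIdeal K L) (D : L →ₗ[K] L) (hD : Function.Surjective D)
    (hder : ∀ x y : L, D ⁅x, y⁆ = ⁅D x, y⁆ + ⁅x, D y⁆)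
    (hI : (I : Submodule K L) ≤ (I : Submodule K L).comap D) :
    HasBijectiveDerivation K (L ⧸ I) := by
  let Dq : (L ⧸ I) →ₗ[K] (L ⧸ I) := Submodule.mapQ I.toSubmodule I.toSubmodule D hI
  have hDq : ∀ x : L, Dq (LieSubmodule.Quotient.mk x) = LieSubmodule.Quotient.mk (D x) :=
    fun x => Submodule.mapQ_apply _ _ D x
  have hsurj : Function.Surjective Dq := by
    intro z
    obtain ⟨y, rfl⟩ := LieSubmodule.Quotient.surjective_mk' I z
    obtain ⟨x, rfl⟩ := hD y
    exact ⟨_, hDq x⟩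
  refine ⟨Dq, ⟨LinearMap.injective_iff_surjective.mpr hsurj, hsurj⟩, fun u v => ?_⟩
  obtain ⟨x, rfl⟩ := LieSubmodule.Quotient.surjective_mk' I u
  obtain ⟨y, rfl⟩ := LieSubmodule.Quotient.surjective_mk' I v
  simp only [LieSubmodule.Quotient.mk'_apply, ← LieSubmodule.Quotient.mk_bracket, hDq]
  rw [hder]
  exact Submodule.Quotient.mk_add _

end Derivation

namespace LinearMap.BilinForm

section

variable {K V : Type*} [Field K] [AddCommGroup V] [Module K V] [FiniteDimensional K V]
  {B ω : BilinForm K V}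

lemma eq_of_orthogonal_eq_of_le_orthogonal (hB : B.Nondegenerate) (hB₀ : B.IsRefl)
    {J W : Submodule K V} (hJ : J ≤ B.orthogonal J) (hW : B.orthogonal W = J)
    (hfin : Module.finrank K W = Module.finrank K J) : W = J := by
  have hJfin : Module.finrank K J = Module.finrank K V - Module.finrank K J := by
    rw [← hfin, ← finrank_orthogonal hB, hW, hfin]
  have hJJ : J = B.orthogonal J := by
    refine Submodule.eq_of_le_of_finrank_le hJ ?_
    rw [finrank_orthogonal hB]
    omega
  rw [← orthogonal_orthogonal hB hB₀ W, hW, ← hJJ]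

lemma injective_symmCompOfNondegenerate (hB : B.Nondegenerate) (hω : ω.Nondegenerate) :
    Function.Injective (ω.symmCompOfNondegenerate B hB) := by
  rw [← LinearMap.ker_eq_bot, Submodule.eq_bot_iff]
  intro x hx
  refine hω.1 x fun y => ?_
  rw [← symmCompOfNondegenerate_left_apply ω hB, LinearMap.mem_ker.mp hx, map_zero,
    LinearMap.zero_apply]

lemma map_symmCompOfNondegenerate_eq (hB : B.Nondegenerate) (hB₀ : B.IsRefl)
    (hω : ω.Nondegenerate) (hωalt : ω.IsAlt) {J : Submodule K V}
    (hiso : ∀ x ∈ J, ∀ y ∈ J, B x y = 0) (hlag : ∀ x, x ∈ J ↔ ∀ u ∈ J, ω x u = 0) :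
    J.map (ω.symmCompOfNondegenerate B hB) = J := by
  set D := ω.symmCompOfNondegenerate B hB
  have horth : B.orthogonal (J.map D) = J := by
    ext x
    simp only [mem_orthogonal_iff, Submodule.mem_map, forall_exists_index, and_imp,
      forall_apply_eq_imp_iff₂, hlag x]
    refine forall₂_congr fun u _ => ?_
    rw [symmCompOfNondegenerate_left_apply]
    exact hωalt.eq_iff
  refine eq_of_orthogonal_eq_of_le_orthogonal hB hB₀
    (fun y hy x hx => hiso x hx y hy) horth ?_
  exact (Submodule.equivMapOfInjective _
    (injective_symmCompOfNondegenerate hB hω) J).finrank_eq.symm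

end

section

variable {K g : Type*} [Field K] [LieRing g] [LieAlgebra K g] [FiniteDimensional K g]
  {B ω : BilinForm K g}

lemma symmCompOfNondegenerate_lie (hB : B.Nondegenerate) (hBsymm : B.IsSymm)
    (hBinv : ∀ x y z : g, B ⁅x, y⁆ z = B x ⁅y, z⁆) (hωalt : ω.IsAlt)
    (hωcyc : ∀ x y z : g, ω ⁅x, y⁆ z + ω ⁅y, z⁆ x + ω ⁅z, x⁆ y = 0) (x y : g) :
    ω.symmCompOfNondegenerate B hB ⁅x, y⁆ =
      ⁅ω.symmCompOfNondegenerate B hB x, y⁆ + ⁅x, ω.symmCompOfNondegenerate B hB y⁆ := by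
  set D := ω.symmCompOfNondegenerate B hB
  have hD (u v : g) : B (D u) v = ω u v := symmCompOfNondegenerate_left_apply ω hB v u
  refine sub_eq_zero.mp (hB.1 _ fun z => ?_)
  have h₁ : B ⁅D x, y⁆ z = -ω ⁅y, z⁆ x := by
    rw [hBinv, hD, hωalt.neg_eq]
  have h₂ : B ⁅x, D y⁆ z = -ω ⁅z, x⁆ y := by
    rw [hBinv, hBsymm.eq, hBinv, hD, hωalt.neg_eq]
  simp only [map_sub, map_add, LinearMap.sub_apply, LinearMap.add_apply, h₁, h₂, hD]
  linear_combination hωcyc x y z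

end

end LinearMap.BilinForm

theorem stmt_7_general (K : Type u) [Field K]
    (a : Type v) [LieRing a] [LieAlgebra K a] [Module.Finite K a] :
    (∃ D : a →ₗ[K] a, Function.Bijective D ∧
      ∀ x y : a, D ⁅x, y⁆ = ⁅D x, y⁆ + ⁅x, D y⁆) ↔
    ∃ (g : Type (max u v)) (_ : LieRing g) (_ : LieAlgebra K g) (_ : Module.Finite K g)
      (B ω : LinearMap.BilinForm K g) (I : LieIdeal K g),
      B.Nondegenerate ∧ (∀ x y : g, B x y = B y x) ∧
      (∀ x y z : g, B ⁅x, y⁆ z = B x ⁅y, z⁆) ∧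
      ω.Nondegenerate ∧ (∀ x : g, ω x x = 0) ∧
      (∀ x y z : g, ω ⁅x, y⁆ z + ω ⁅y, z⁆ x + ω ⁅z, x⁆ y = 0) ∧
      (∀ x ∈ I, ∀ y ∈ I, B x y = 0) ∧
      (∀ x : g, x ∈ I ↔ ∀ u ∈ I, ω x u = 0) ∧
      Nonempty (a ≃ₗ⁅K⁆ (g ⧸ I)) := by
  constructor
  · rintro ⟨D, hD, hder⟩
    exact ⟨TStar K a, inferInstance, inferInstance, inferInstance, TStar.hyperbolicForm K a,
      TStar.derivationForm D, (LieAlgebra.ofTwoCocycle.proj _).ker,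
      TStar.hyperbolicForm_nondegenerate, TStar.hyperbolicForm_isSymm.eq, TStar.hyperbolicForm_lie,
      TStar.derivationForm_nondegenerate hD, TStar.derivationForm_isAlt D,
      TStar.derivationForm_cyclic D hder,
      fun _ hp _ hq => TStar.hyperbolicForm_eq_zero_of_mem_ker hp hq,
      TStar.mem_ker_proj_iff_forall_derivationForm hD.injective,
      ⟨(LieHom.quotKerEquivOfSurjective _ (LieAlgebra.ofTwoCocycle.proj_surjective _)).symm⟩⟩
  · rintro ⟨g, _, _, _, B, ω, I, hB, hBsymm, hBinv, hω, hωalt, hωcyc, hiso, hlag, ⟨e⟩⟩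
    have hB' : B.IsSymm := ⟨hBsymm⟩
    have hDI := BilinForm.map_symmCompOfNondegenerate_eq hB hB'.isRefl hω hωalt hiso hlag
    refine (HasBijectiveDerivation.quotient I _ ?_
      (BilinForm.symmCompOfNondegenerate_lie hB hB' hBinv hωalt hωcyc)
      (Submodule.map_le_iff_le_comap.mp hDI.le)).of_lieEquiv e
    exact LinearMap.injective_iff_surjective.mp (BilinForm.injective_symmCompOfNondegenerate hB hω)

/-- A finite-dimensional Lie algebra `a` over a field of characteristic zero admits an
invertible derivation if and only if it is isomorphic to the quotient of a quadratic symplectic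
Lie algebra `(g, B, ω)` by an ideal `I` which is completely isotropic for `B` and lagrangian
for `ω`. -/
theorem stmt_7 (K : Type u) [Field K] [CharZero K]
    (a : Type v) [LieRing a] [LieAlgebra K a] [Module.Finite K a] :
    (∃ D : a →ₗ[K] a, Function.Bijective D ∧
      ∀ x y : a, D ⁅x, y⁆ = ⁅D x, y⁆ + ⁅x, D y⁆) ↔
    ∃ (g : Type (max u v)) (_ : LieRing g) (_ : LieAlgebra K g) (_ : Module.Finite K g)
      (B ω : LinearMap.BilinForm K g) (I : LieIdeal K g),
      B.Nondegenerate ∧ (∀ x y : g, B x y = B y x) ∧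
      (∀ x y z : g, B ⁅x, y⁆ z = B x ⁅y, z⁆) ∧
      ω.Nondegenerate ∧ (∀ x : g, ω x x = 0) ∧
      (∀ x y z : g, ω ⁅x, y⁆ z + ω ⁅y, z⁆ x + ω ⁅z, x⁆ y = 0) ∧
      (∀ x ∈ I, ∀ y ∈ I, B x y = 0) ∧
      (∀ x : g, x ∈ I ↔ ∀ u ∈ I, ω x u = 0) ∧
      Nonempty (a ≃ₗ⁅K⁆ (g ⧸ I)) :=
  stmt_7_general K a
end

section
/- Let (g,B) be a quadratic Lie algebra over a field K of characteristic 0, D an invertible derivation of g skew-symmetric with respect to B, δ a derivation of g skew-symmetric with respect to B, λ ∈ K∖{0} and c ∈ g such that [δ,D] − λδ = ad_g(c). Let (g̃,T) be the double extension of (g,B) by the one-dimensional Lie algebra by means of δ. Then the linear endomorphism D̃ of g̃ defined by D̃(x) = Dx + B(c,x)e* for x in g, D̃(e*) = λe*, and D̃(e) = −λe − c, is an invertible derivation of g̃ that is skew-symmetric with respect to T. -/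
/-!
Every identity is checked componentwise on `g̃ = K e ⊕ g ⊕ K e*`. On the `g`-component,
the derivation property of `D` leaves exactly the terms `[δ, D] x - λ δ x`, which the correction
`-c` in `D̃ e` absorbs through `[δ, D] - λ δ = ad c`. On the `e*`-component the cocycle
`(x, y) ↦ B(δ x, y)` is moved by `D` to `B(c, [x, y]) + λ B(δ x, y)` by the same relation and
invariance of `B`, and this is what the term `B(c, x) e*` of `D̃` compensates.
Invertibility is triangularity: `D̃` acts by `-λ`, `D`, `λ` on the three components.
-/

namespace DoubleExtension

variable {K g : Type*}

section Ring

variable [CommRing K] [LieRing g] [LieAlgebra K g]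

def bracket (B : LinearMap.BilinForm K g) (δ : g →ₗ[K] g) (p q : K × g × K) : K × g × K :=
  (0, ⁅p.2.1, q.2.1⁆ + p.1 • δ q.2.1 - q.1 • δ p.2.1, B (δ p.2.1) q.2.1)

def form (B : LinearMap.BilinForm K g) (p q : K × g × K) : K :=
  B p.2.1 q.2.1 + p.1 * q.2.2 + q.1 * p.2.2

def extendedDerivation (B : LinearMap.BilinForm K g) (D : g →ₗ[K] g) (lam : K) (c : g) :
    (K × g × K) →ₗ[K] (K × g × K) where
  toFun p := (-(lam * p.1), D p.2.1 - p.1 • c, B c p.2.1 + lam * p.2.2)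
  map_add' p q := by
    simp only [Prod.fst_add, Prod.snd_add, map_add, add_smul, Prod.mk_add_mk, Prod.mk.injEq]
    exact ⟨by ring, by abel, by ring⟩
  map_smul' m p := by
    simp only [Prod.smul_fst, Prod.smul_snd, smul_eq_mul, map_smul, RingHom.id_apply,
      Prod.smul_mk, Prod.mk.injEq]
    exact ⟨by ring, by module, by ring⟩

@[simp]
theorem extendedDerivation_apply (B : LinearMap.BilinForm K g) (D : g →ₗ[K] g) (lam : K)
    (c : g) (p : K × g × K) :
    extendedDerivation B D lam c p =
      (-(lam * p.1), D p.2.1 - p.1 • c, B c p.2.1 + lam * p.2.2) :=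
  rfl

variable {B : LinearMap.BilinForm K g} {D δ : g →ₗ[K] g} {lam : K} {c : g}

theorem map_lie_add_smul_sub_smul
    (hDder : ∀ x y : g, D ⁅x, y⁆ = ⁅D x, y⁆ + ⁅x, D y⁆)
    (hcomm : ∀ x : g, δ (D x) - D (δ x) - lam • δ x = ⁅c, x⁆) (a b : K) (x y : g) :
    D (⁅x, y⁆ + a • δ y - b • δ x) =
      (⁅D x - a • c, y⁆ + (-(lam * a)) • δ y - b • δ (D x - a • c)) +
        (⁅x, D y - b • c⁆ + a • δ (D y - b • c) - (-(lam * b)) • δ x) := by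
  simp only [map_add, map_sub, map_smul, hDder, lie_sub, sub_lie, smul_lie, lie_smul]
  linear_combination (norm := module) b • hcomm x - b • lie_skew c x - a • hcomm y

theorem cocycle_map_add_map
    (hDskew : ∀ x y : g, B (D x) y = - B x (D y))
    (hBinv : ∀ x y z : g, B ⁅x, y⁆ z = B x ⁅y, z⁆)
    (hcomm : ∀ x : g, δ (D x) - D (δ x) - lam • δ x = ⁅c, x⁆) (x y : g) :
    B (δ (D x)) y + B (δ x) (D y) = B c ⁅x, y⁆ + lam * B (δ x) y := by
  have h := congrArg (B · y) (hcomm x)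
  simp only [map_sub, map_smul, LinearMap.sub_apply, LinearMap.smul_apply, smul_eq_mul,
    hBinv] at h
  linear_combination h + hDskew (δ x) y

theorem extendedDerivation_bracket
    (hBsymm : ∀ x y : g, B x y = B y x)
    (hBinv : ∀ x y z : g, B ⁅x, y⁆ z = B x ⁅y, z⁆)
    (hDder : ∀ x y : g, D ⁅x, y⁆ = ⁅D x, y⁆ + ⁅x, D y⁆)
    (hDskew : ∀ x y : g, B (D x) y = - B x (D y))
    (hδskew : ∀ x y : g, B (δ x) y = - B x (δ y))
    (hcomm : ∀ x : g, δ (D x) - D (δ x) - lam • δ x = ⁅c, x⁆) (p q : K × g × K) :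
    extendedDerivation B D lam c (bracket B δ p q) =
      bracket B δ (extendedDerivation B D lam c p) q +
        bracket B δ p (extendedDerivation B D lam c q) := by
  obtain ⟨a, x, -⟩ := p
  obtain ⟨b, y, -⟩ := q
  simp only [bracket, extendedDerivation_apply, zero_smul, sub_zero, Prod.mk_add_mk,
    Prod.mk.injEq]
  refine ⟨by ring, map_lie_add_smul_sub_smul hDder hcomm a b x y, ?_⟩
  simp only [map_add, map_sub, map_smul, smul_eq_mul,
    LinearMap.sub_apply, LinearMap.smul_apply]
  linear_combination -cocycle_map_add_map hDskew hBinv hcomm x y + a * hδskew c y +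
    b * (hδskew x c - hBsymm x (δ c) - hδskew c x)

theorem form_extendedDerivation
    (hBsymm : ∀ x y : g, B x y = B y x)
    (hDskew : ∀ x y : g, B (D x) y = - B x (D y)) (p q : K × g × K) :
    form B (extendedDerivation B D lam c p) q = - form B p (extendedDerivation B D lam c q) := by
  obtain ⟨a, x, s⟩ := p
  obtain ⟨b, y, t⟩ := q
  simp only [form, extendedDerivation_apply, map_sub, map_smul, LinearMap.sub_apply,
    LinearMap.smul_apply, smul_eq_mul]
  linear_combination hDskew x y + b * hBsymm c x

end Ring

theorem extendedDerivation_bijective [Field K] [LieRing g] [LieAlgebra K g]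
    {B : LinearMap.BilinForm K g} {D : g →ₗ[K] g} {lam : K} (c : g)
    (hD : Function.Bijective D) (hlam : lam ≠ 0) :
    Function.Bijective (extendedDerivation B D lam c) := by
  refine ⟨fun ⟨a, x, s⟩ ⟨b, y, t⟩ h => ?_, fun ⟨b, y, t⟩ => ?_⟩
  · simp only [extendedDerivation_apply, Prod.mk.injEq, neg_inj] at h
    obtain ⟨hab, hxy, hst⟩ := h
    obtain rfl : a = b := mul_left_cancel₀ hlam hab
    obtain rfl : x = y := hD.1 (sub_left_inj.mp hxy)
    obtain rfl : s = t := mul_left_cancel₀ hlam (add_left_cancel hst)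
    rfl
  · obtain ⟨x, hx⟩ := hD.2 (y - (b / lam) • c)
    refine ⟨(-(b / lam), x, (t - B c x) / lam), ?_⟩
    simp only [extendedDerivation_apply, hx, Prod.mk.injEq]
    refine ⟨by field_simp, by module, by field_simp; ring⟩

end DoubleExtension

open DoubleExtension in
theorem stmt_11_general (K : Type*) [Field K]
    (g : Type*) [LieRing g] [LieAlgebra K g]
    (B : LinearMap.BilinForm K g)
    (hBsymm : ∀ x y : g, B x y = B y x)
    (hBinv : ∀ x y z : g, B ⁅x, y⁆ z = B x ⁅y, z⁆)
    (D : g →ₗ[K] g) (hDbij : Function.Bijective D)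
    (hDder : ∀ x y : g, D ⁅x, y⁆ = ⁅D x, y⁆ + ⁅x, D y⁆)
    (hDskew : ∀ x y : g, B (D x) y = - B x (D y))
    (δ : g →ₗ[K] g)
    (hδskew : ∀ x y : g, B (δ x) y = - B x (δ y))
    (lam : K) (hlam : lam ≠ 0) (c : g)
    (hcomm : ∀ x : g, δ (D x) - D (δ x) - lam • δ x = ⁅c, x⁆)
    (br : K × g × K → K × g × K → K × g × K)
    (hbr : ∀ p q : K × g × K, br p q =
      (0, ⁅p.2.1, q.2.1⁆ + p.1 • δ q.2.1 - q.1 • δ p.2.1, B (δ p.2.1) q.2.1))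
    (T : K × g × K → K × g × K → K)
    (hT : ∀ p q : K × g × K, T p q = B p.2.1 q.2.1 + p.1 * q.2.2 + q.1 * p.2.2) :
    ∃ Dt : (K × g × K) →ₗ[K] (K × g × K),
      (∀ p : K × g × K,
        Dt p = (-(lam * p.1), D p.2.1 - p.1 • c, B c p.2.1 + lam * p.2.2)) ∧
      Function.Bijective Dt ∧
      (∀ p q : K × g × K, Dt (br p q) = br (Dt p) q + br p (Dt q)) ∧
      (∀ p q : K × g × K, T (Dt p) q = - T p (Dt q)) := by
  obtain rfl : br = bracket B δ := funext₂ hbr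
  obtain rfl : T = form B := funext₂ hT
  exact ⟨extendedDerivation B D lam c, extendedDerivation_apply B D lam c,
    extendedDerivation_bijective c hDbij hlam,
    extendedDerivation_bracket hBsymm hBinv hDder hDskew hδskew hcomm,
    form_extendedDerivation hBsymm hDskew⟩

/-- Let `(g, B)` be quadratic with invertible skew-symmetric derivation `D`, let `δ` be a
skew-symmetric derivation, `λ ≠ 0` and `c ∈ g` with `[δ,D] - λδ = ad c`.  On the double
extension `g̃ = K e ⊕ g ⊕ K e*` (modelled as `K × g × K`, with `e = (1,0,0)`,
`e* = (0,0,1)`, bracket `br` and scalar product `T`), the endomorphism `D̃` with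
`D̃ x = D x + B(c,x) e*` on `g`, `D̃ e* = λ e*`, `D̃ e = -λ e - c` is an invertible derivation
which is skew-symmetric with respect to `T`. -/
theorem stmt_11 (K : Type*) [Field K] [CharZero K]
    (g : Type*) [LieRing g] [LieAlgebra K g] [Module.Finite K g]
    (B : LinearMap.BilinForm K g)
    (hBnd : B.Nondegenerate)
    (hBsymm : ∀ x y : g, B x y = B y x)
    (hBinv : ∀ x y z : g, B ⁅x, y⁆ z = B x ⁅y, z⁆)
    (D : g →ₗ[K] g) (hDbij : Function.Bijective D)
    (hDder : ∀ x y : g, D ⁅x, y⁆ = ⁅D x, y⁆ + ⁅x, D y⁆)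
    (hDskew : ∀ x y : g, B (D x) y = - B x (D y))
    (δ : g →ₗ[K] g)
    (hδder : ∀ x y : g, δ ⁅x, y⁆ = ⁅δ x, y⁆ + ⁅x, δ y⁆)
    (hδskew : ∀ x y : g, B (δ x) y = - B x (δ y))
    (lam : K) (hlam : lam ≠ 0) (c : g)
    (hcomm : ∀ x : g, δ (D x) - D (δ x) - lam • δ x = ⁅c, x⁆)
    (br : K × g × K → K × g × K → K × g × K)
    (hbr : ∀ p q : K × g × K, br p q =
      (0, ⁅p.2.1, q.2.1⁆ + p.1 • δ q.2.1 - q.1 • δ p.2.1, B (δ p.2.1) q.2.1))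
    (T : K × g × K → K × g × K → K)
    (hT : ∀ p q : K × g × K, T p q = B p.2.1 q.2.1 + p.1 * q.2.2 + q.1 * p.2.2) :
    ∃ Dt : (K × g × K) →ₗ[K] (K × g × K),
      (∀ p : K × g × K,
        Dt p = (-(lam * p.1), D p.2.1 - p.1 • c, B c p.2.1 + lam * p.2.2)) ∧
      Function.Bijective Dt ∧
      (∀ p q : K × g × K, Dt (br p q) = br (Dt p) q + br p (Dt q)) ∧
      (∀ p q : K × g × K, T (Dt p) q = - T p (Dt q)) :=
  stmt_11_general K g B hBsymm hBinv D hDbij hDder hDskew δ hδskew lam hlam c hcomm br hbr T hT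
end

section
/- Let (g̃,T,ω̃) be a quadratic symplectic Lie algebra over a field K of characteristic 0 and let D̃ be the invertible derivation of g̃, skew-symmetric with respect to T, such that ω̃(X,Y) = T(D̃X,Y) for all X,Y in g̃. If there exists a one-dimensional ideal I of g̃ contained in the centre of g̃ with D̃(I) ⊆ I, then there exist a quadratic symplectic Lie algebra (g,B,ω), a derivation δ of g skew-symmetric with respect to B, λ ∈ K∖{0} and c ∈ g with [δ,D] − λδ = ad_g(c) (where D is the invertible skew-symmetric derivation of (g,B) with ω(x,y) = B(Dx,y)), such that (g̃,T,ω̃) is isomorphic to the quadratic symplectic double extension of (g,B,ω) by the one-dimensional algebra by means of (δ,c), via a Lie algebra isomorphism carrying T and ω̃ to the corresponding forms. -/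
/-!
Write `e'` for a spanning vector of `I` (the paper's `e*`). It is an eigenvector of `D̃` with
eigenvalue `λ ≠ 0`, so skew-symmetry of `D̃` makes it isotropic, and nondegeneracy of `T` provides
an isotropic `e` with `T(e', e) = 1`. Then `g̃ = K e ⊕ g ⊕ K e'` with `g = {e, e'}^⊥`, and every
`p` splits as `T(p, e') e + π p + T(p, e) e'`, where `π` is the orthogonal projection onto `g`.
On `g` take the restriction `B` of `T`, the bracket `π [x, y] = [x, y] - T([x, y], e) e'` (it
differs from the bracket of `g̃` by a central term, so the Jacobi identity survives), and the
compressions `D = π D̃` and `δ = π ad e`; they are skew derivations because `D̃` and `ad e` are and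
both map `e'` into `K e'`. With `c = -π (D̃ e)` one has `D̃ e = -λ e - c`, and the identities of the
double extension are read off from the splitting.
-/

theorem LinearMap.BilinForm.Nondegenerate.comp_of_bijective {R M : Type*} [CommRing R]
    [AddCommGroup M] [Module R M] {B : LinearMap.BilinForm R M} {f : M →ₗ[R] M}
    (hB : B.Nondegenerate) (hf : Function.Bijective f) : (B ∘ₗ f).Nondegenerate := by
  refine ⟨fun x hx => hf.1 ?_, fun y hy => hB.2 y fun z => ?_⟩
  · rw [hB.1 (f x) hx, map_zero]
  · obtain ⟨x, rfl⟩ := hf.2 z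
    exact hy x

namespace LieAlgebra

variable {K L : Type*} [Field K] [LieRing L] [LieAlgebra K L]

structure IsSkewDerivation (B : LinearMap.BilinForm K L) (D : L →ₗ[K] L) : Prop where
  leibniz : ∀ x y : L, D ⁅x, y⁆ = ⁅D x, y⁆ + ⁅x, D y⁆
  skew : ∀ x y : L, B (D x) y = -B x (D y)

namespace IsSkewDerivation

variable {B : LinearMap.BilinForm K L} {D : L →ₗ[K] L}

theorem apply_self_eq_zero [NeZero (2 : K)] (hD : IsSkewDerivation B D)
    (hB : ∀ x y : L, B x y = B y x) (x : L) : B (D x) x = 0 := by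
  have h : (2 : K) * B (D x) x = 0 := by linear_combination hD.skew x x - hB x (D x)
  exact (mul_eq_zero.mp h).resolve_left two_ne_zero

theorem isotropic_of_eigenvector [NeZero (2 : K)] (hD : IsSkewDerivation B D)
    (hB : ∀ x y : L, B x y = B y x) {v : L} {μ : K} (hv : D v = μ • v) (hμ : μ ≠ 0) :
    B v v = 0 := by
  have h := hD.apply_self_eq_zero hB v
  rw [hv, map_smul, LinearMap.smul_apply, smul_eq_mul] at h
  exact (mul_eq_zero.mp h).resolve_left hμ

/-- With `ω = B(D·,·)`: `ω([x,y],z) + ω([z,x],y) = B(Dx,[y,z]) = -ω([y,z],x)`. -/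
theorem cocycle (hD : IsSkewDerivation B D) (hB : ∀ x y : L, B x y = B y x)
    (hinv : ∀ x y z : L, B ⁅x, y⁆ z = B x ⁅y, z⁆) (x y z : L) :
    B (D ⁅x, y⁆) z + B (D ⁅y, z⁆) x + B (D ⁅z, x⁆) y = 0 := by
  have h₁ : B ⁅x, D y⁆ z = -B (D ⁅z, x⁆) y := by
    rw [hinv, hB x, hinv, hB (D y), hD.skew, neg_neg]
  have h₂ : B (D x) ⁅y, z⁆ = -B (D ⁅y, z⁆) x := by
    rw [hD.skew, hB x]
  rw [hD.leibniz, map_add, LinearMap.add_apply, hinv, h₁, h₂]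
  ring

end IsSkewDerivation

theorem isSkewDerivation_ad {B : LinearMap.BilinForm K L}
    (hinv : ∀ x y z : L, B ⁅x, y⁆ z = B x ⁅y, z⁆) (z : L) : IsSkewDerivation B (ad K L z) where
  leibniz x y := leibniz_lie z x y
  skew x y := by rw [ad_apply, ad_apply, ← lie_skew, map_neg, LinearMap.neg_apply, hinv]

theorem exists_isotropic_partner [NeZero (2 : K)] {T : LinearMap.BilinForm K L}
    (hT : T.Nondegenerate) (hsymm : ∀ x y : L, T x y = T y x) {v : L} (hv : v ≠ 0)
    (hvv : T v v = 0) : ∃ e : L, T v e = 1 ∧ T e e = 0 := by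
  obtain ⟨u, hu⟩ : ∃ u, T v u ≠ 0 := by
    by_contra! h
    exact hv (hT.1 v h)
  set e₀ := (T v u)⁻¹ • u
  have he₀ : T v e₀ = 1 := by simp [e₀, hu]
  refine ⟨e₀ - (T e₀ e₀ / 2) • v, ?_, ?_⟩
  · simp [he₀, hvv]
  · simp only [map_sub, map_smul, LinearMap.sub_apply, LinearMap.smul_apply, smul_eq_mul,
      hvv, he₀, hsymm e₀ v]
    field_simp
    ring

structure CentralHyperbolicPair (T : LinearMap.BilinForm K L) where
  symm : ∀ x y : L, T x y = T y x
  invariant : ∀ x y z : L, T ⁅x, y⁆ z = T x ⁅y, z⁆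
  e : L
  e' : L
  lie_e' : ∀ x : L, ⁅x, e'⁆ = 0
  pairing : T e' e = 1
  isotropic : T e e = 0
  isotropic' : T e' e' = 0

namespace CentralHyperbolicPair

variable {T : LinearMap.BilinForm K L} (H : CentralHyperbolicPair T)

theorem e'_lie (x : L) : ⁅H.e', x⁆ = 0 := by
  rw [← lie_skew, H.lie_e', neg_zero]

theorem pairing' : T H.e H.e' = 1 := by
  rw [H.symm, H.pairing]

theorem form_lie_e' (x y : L) : T ⁅x, y⁆ H.e' = 0 := by
  rw [H.invariant, H.lie_e', map_zero]

theorem form_lie_e_e (x : L) : T ⁅H.e, x⁆ H.e = 0 := by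
  rw [← lie_skew, map_neg, LinearMap.neg_apply, H.invariant, lie_self, map_zero, neg_zero]

def orthogonal : Submodule K L :=
  LinearMap.ker (T.flip H.e) ⊓ LinearMap.ker (T.flip H.e')

theorem mem_orthogonal {x : L} : x ∈ H.orthogonal ↔ T x H.e = 0 ∧ T x H.e' = 0 := by
  simp [orthogonal]

theorem form_coe_e (w : H.orthogonal) : T w H.e = 0 := (H.mem_orthogonal.mp w.2).1

theorem form_coe_e' (w : H.orthogonal) : T w H.e' = 0 := (H.mem_orthogonal.mp w.2).2

theorem form_e_coe (w : H.orthogonal) : T H.e w = 0 := by rw [H.symm, form_coe_e]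

theorem form_e'_coe (w : H.orthogonal) : T H.e' w = 0 := by rw [H.symm, form_coe_e']

theorem e_lie_mem (x : L) : ⁅H.e, x⁆ ∈ H.orthogonal :=
  H.mem_orthogonal.mpr ⟨H.form_lie_e_e x, H.form_lie_e' _ _⟩

def proj : L →ₗ[K] H.orthogonal :=
  LinearMap.codRestrict H.orthogonal
    (LinearMap.id - (T.flip H.e').smulRight H.e - (T.flip H.e).smulRight H.e') fun p => by
      simp [mem_orthogonal, H.pairing, H.pairing', H.isotropic, H.isotropic']

theorem coe_proj (p : L) : (H.proj p : L) = p - T p H.e' • H.e - T p H.e • H.e' := rfl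

theorem proj_coe (w : H.orthogonal) : H.proj w = w := by
  ext
  rw [coe_proj, form_coe_e, form_coe_e', zero_smul, zero_smul, sub_zero, sub_zero]

theorem proj_e' : H.proj H.e' = 0 := by
  ext
  simp [coe_proj, H.pairing, H.isotropic']

theorem decompose (p : L) : T p H.e' • H.e + H.proj p + T p H.e • H.e' = p := by
  rw [coe_proj]
  abel

theorem form_proj_coe (p : L) (w : H.orthogonal) : T (H.proj p) w = T p w := by
  simp [coe_proj, form_e_coe, form_e'_coe]

theorem form_coe_proj (w : H.orthogonal) (p : L) : T w (H.proj p) = T w p := by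
  rw [H.symm, form_proj_coe, H.symm]

theorem coe_proj_lie (x y : L) : (H.proj ⁅x, y⁆ : L) = ⁅x, y⁆ - T ⁅x, y⁆ H.e • H.e' := by
  rw [coe_proj, form_lie_e', zero_smul, sub_zero]

theorem lie_coe_proj_right {p : L} (hp : T p H.e' = 0) (z : L) :
    ⁅z, (H.proj p : L)⁆ = ⁅z, p⁆ := by
  rw [coe_proj, hp, zero_smul, sub_zero, lie_sub, lie_smul, H.lie_e', smul_zero, sub_zero]

theorem lie_coe_proj_left {p : L} (hp : T p H.e' = 0) (z : L) :
    ⁅(H.proj p : L), z⁆ = ⁅p, z⁆ := by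
  rw [← lie_skew, H.lie_coe_proj_right hp, lie_skew]

instance : Bracket H.orthogonal H.orthogonal :=
  ⟨fun x y => H.proj ⁅(x : L), (y : L)⁆⟩

theorem coe_lie (x y : H.orthogonal) : ((⁅x, y⁆ : H.orthogonal) : L) = H.proj ⁅(x : L), y⁆ :=
  rfl

instance : LieRing H.orthogonal where
  add_lie x y z := by ext; simp only [coe_lie, Submodule.coe_add, add_lie, map_add]
  lie_add x y z := by ext; simp only [coe_lie, Submodule.coe_add, lie_add, map_add]
  lie_self x := by ext; simp only [coe_lie, lie_self, map_zero]
  leibniz_lie x y z := by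
    ext
    simp only [Submodule.coe_add, coe_lie, lie_coe_proj_right, lie_coe_proj_left, form_lie_e']
    rw [← Submodule.coe_add, ← map_add, ← leibniz_lie]

instance : LieAlgebra K H.orthogonal where
  lie_smul t x y := by ext; simp only [coe_lie, Submodule.coe_smul, lie_smul, map_smul]

theorem restrict_symm (x y : H.orthogonal) :
    T.restrict H.orthogonal x y = T.restrict H.orthogonal y x :=
  H.symm x y

theorem restrict_invariant (x y z : H.orthogonal) :
    T.restrict H.orthogonal ⁅x, y⁆ z = T.restrict H.orthogonal x ⁅y, z⁆ := by
  simp only [LinearMap.BilinForm.restrict_apply, LinearMap.domRestrict_apply, coe_lie,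
    form_proj_coe, form_coe_proj, H.invariant]

theorem restrict_nondegenerate (hT : T.Nondegenerate) :
    (T.restrict H.orthogonal).Nondegenerate := by
  have hleft : (T.restrict H.orthogonal).SeparatingLeft := fun x hx => by
    ext
    refine hT.1 x fun p => ?_
    rw [← H.decompose p]
    simp only [map_add, map_smul, smul_eq_mul, form_coe_e, form_coe_e', form_coe_proj]
    simpa [form_coe_proj] using hx (H.proj p)
  exact ⟨hleft, fun y hy => hleft y fun x => by rw [H.restrict_symm]; exact hy x⟩

def compress (f : L →ₗ[K] L) : H.orthogonal →ₗ[K] H.orthogonal :=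
  H.proj ∘ₗ f ∘ₗ H.orthogonal.subtype

theorem compress_apply (f : L →ₗ[K] L) (x : H.orthogonal) : H.compress f x = H.proj (f x) :=
  rfl

theorem coe_proj_e_lie (p : L) : (H.proj ⁅H.e, p⁆ : L) = ⁅H.e, p⁆ :=
  congrArg Subtype.val (H.proj_coe ⟨_, H.e_lie_mem p⟩)

theorem e_lie_coe_proj (p : L) : ⁅H.e, (H.proj p : L)⁆ = ⁅H.e, p⁆ := by
  rw [coe_proj, lie_sub, lie_sub, lie_smul, lie_smul, lie_self, H.lie_e', smul_zero, smul_zero,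
    sub_zero, sub_zero]

theorem coe_compress_ad (x : H.orthogonal) : (H.compress (ad K L H.e) x : L) = ⁅H.e, (x : L)⁆ :=
  H.coe_proj_e_lie x

section SkewDerivation

variable {f : L →ₗ[K] L} {μ : K}

theorem form_apply_e' (hf : IsSkewDerivation T f) (hfe' : f H.e' = μ • H.e') (p : L) :
    T (f p) H.e' = -(μ * T p H.e') := by
  rw [hf.skew, hfe', map_smul, smul_eq_mul, mul_comm]

theorem form_apply_coe_e' (hf : IsSkewDerivation T f) (hfe' : f H.e' = μ • H.e')
    (w : H.orthogonal) : T (f w) H.e' = 0 := by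
  rw [H.form_apply_e' hf hfe', form_coe_e', mul_zero, neg_zero]

theorem compress_isSkewDerivation (hf : IsSkewDerivation T f) (hfe' : f H.e' = μ • H.e') :
    IsSkewDerivation (T.restrict H.orthogonal) (H.compress f) where
  leibniz x y := by
    ext
    simp only [compress_apply, Submodule.coe_add, coe_lie,
      H.lie_coe_proj_left (H.form_apply_coe_e' hf hfe' x),
      H.lie_coe_proj_right (H.form_apply_coe_e' hf hfe' y), coe_proj_lie, map_sub, map_smul,
      hfe', proj_e', smul_zero, sub_zero, hf.leibniz, map_add]
  skew x y := by
    simp only [LinearMap.BilinForm.restrict_apply, LinearMap.domRestrict_apply, compress_apply,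
      form_proj_coe, form_coe_proj, hf.skew]

theorem compress_injective (hf : IsSkewDerivation T f) (hfe' : f H.e' = μ • H.e') (hμ : μ ≠ 0)
    (hinj : Function.Injective f) : Function.Injective (H.compress f) := by
  refine (injective_iff_map_eq_zero _).mpr fun x hx => ?_
  have hfx : f x = f ((T (f x) H.e * μ⁻¹) • H.e') := by
    have h := H.decompose (f x)
    rw [H.form_apply_coe_e' hf hfe', ← compress_apply, hx] at h
    rw [map_smul, hfe', smul_smul, inv_mul_cancel_right₀ hμ, ← h]
    simp [H.pairing]
  have hxe := H.form_coe_e x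
  rw [hinj hfx, map_smul, LinearMap.smul_apply, H.pairing, smul_eq_mul, mul_one] at hxe
  ext
  rw [hinj hfx, hxe, zero_smul, Submodule.coe_zero]

def defect (f : L →ₗ[K] L) : H.orthogonal := -H.proj (f H.e)

theorem apply_e [NeZero (2 : K)] (hf : IsSkewDerivation T f) (hfe' : f H.e' = μ • H.e') :
    f H.e = -(μ • H.e) - H.defect f := by
  have h := H.decompose (f H.e)
  rw [H.form_apply_e' hf hfe', H.pairing', hf.apply_self_eq_zero H.symm, zero_smul, add_zero,
    mul_one, neg_smul] at h
  rw [defect, Submodule.coe_neg, sub_neg_eq_add, h]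

theorem proj_apply (hfe' : f H.e' = μ • H.e') (p : L) :
    H.proj (f p) = H.compress f (H.proj p) - T p H.e' • H.defect f := by
  conv_lhs => rw [← H.decompose p]
  simp only [map_add, map_smul, hfe', proj_e', smul_zero, add_zero, compress_apply, defect,
    smul_neg, sub_neg_eq_add]
  abel

theorem form_apply_e [NeZero (2 : K)] (hf : IsSkewDerivation T f) (hfe' : f H.e' = μ • H.e')
    (p : L) : T (f p) H.e = T (H.defect f) (H.proj p) + μ * T p H.e := by
  rw [hf.skew, H.apply_e hf hfe', form_coe_proj, H.symm p]
  simp only [map_sub, map_neg, map_smul, smul_eq_mul, LinearMap.sub_apply, LinearMap.neg_apply,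
    LinearMap.smul_apply, H.symm H.e p]
  ring

theorem compress_ad_commutator [NeZero (2 : K)] (hf : IsSkewDerivation T f)
    (hfe' : f H.e' = μ • H.e') (x : H.orthogonal) :
    H.compress (ad K L H.e) (H.compress f x) - H.compress f (H.compress (ad K L H.e) x)
      - μ • H.compress (ad K L H.e) x = ⁅H.defect f, x⁆ := by
  ext
  simp only [AddSubgroupClass.coe_sub, Submodule.coe_smul, compress_apply, ad_apply,
    coe_proj_e_lie, e_lie_coe_proj, coe_lie, hf.leibniz, H.apply_e hf hfe', sub_lie, neg_lie,
    smul_lie, map_add, map_sub, map_neg, map_smul, Submodule.coe_add, Submodule.coe_neg]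
  abel

end SkewDerivation

theorem proj_lie (p q : L) :
    H.proj ⁅p, q⁆ = ⁅H.proj p, H.proj q⁆ + T p H.e' • H.compress (ad K L H.e) (H.proj q)
      - T q H.e' • H.compress (ad K L H.e) (H.proj p) := by
  ext
  conv_lhs => rw [← H.decompose p, ← H.decompose q]
  simp only [add_lie, lie_add, smul_lie, lie_smul, lie_self, H.lie_e', H.e'_lie, smul_zero,
    add_zero, zero_add, AddSubgroupClass.coe_sub, Submodule.coe_add, Submodule.coe_smul,
    coe_compress_ad, coe_lie, map_add, map_smul]
  rw [← lie_skew (H.proj p : L) H.e, map_neg, Submodule.coe_neg, coe_proj_e_lie, coe_proj_e_lie,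
    smul_neg]
  abel

theorem form_lie_e (p q : L) :
    T ⁅p, q⁆ H.e = T (H.compress (ad K L H.e) (H.proj p)) (H.proj q) := by
  rw [form_coe_proj, coe_compress_ad, e_lie_coe_proj, H.symm, H.invariant]

theorem form_eq (p q : L) :
    T p q = T (H.proj p) (H.proj q) + T p H.e' * T q H.e + T q H.e' * T p H.e := by
  conv_lhs => rw [← H.decompose p, ← H.decompose q]
  simp only [map_add, map_smul, LinearMap.add_apply, LinearMap.smul_apply, smul_eq_mul,
    H.isotropic, H.isotropic', H.pairing, H.pairing', form_coe_e, form_coe_e', form_e_coe,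
    form_e'_coe]
  ring

def equiv : L ≃ₗ[K] K × H.orthogonal × K :=
  LinearEquiv.ofLinearMap ((T.flip H.e').prod (H.proj.prod (T.flip H.e)))
    ((LinearMap.fst K K _).smulRight H.e
      + H.orthogonal.subtype ∘ₗ LinearMap.fst K _ K ∘ₗ LinearMap.snd K K _
      + (LinearMap.snd K _ K ∘ₗ LinearMap.snd K K _).smulRight H.e')
    (by ext <;> simp [coe_proj, H.pairing, H.pairing', H.isotropic, H.isotropic', form_coe_e,
      form_coe_e', proj_coe])
    (LinearMap.ext H.decompose)

theorem equiv_apply (p : L) : H.equiv p = (T p H.e', H.proj p, T p H.e) := rfl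

end CentralHyperbolicPair

theorem exists_central_eigenvector {I : LieIdeal K L} (hI : Module.finrank K I = 1)
    (hIc : I ≤ center K L) {f : L →ₗ[K] L} (hf : ∀ x ∈ I, f x ∈ I) :
    ∃ v : L, v ≠ 0 ∧ (∀ x : L, ⁅x, v⁆ = 0) ∧ ∃ μ : K, f v = μ • v := by
  obtain ⟨v, hv0, hv⟩ := finrank_eq_one_iff'.mp hI
  obtain ⟨μ, hμ⟩ := hv ⟨f v, hf v v.2⟩
  refine ⟨v, fun h => hv0 (Subtype.ext h), (LieModule.mem_maxTrivSubmodule K L L v).mp (hIc v.2),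
    μ, ?_⟩
  simpa using congrArg Subtype.val hμ.symm

end LieAlgebra

open LieAlgebra

theorem stmt_12_general (K : Type u) [Field K] [CharZero K]
    (gt : Type v) [LieRing gt] [LieAlgebra K gt] [Module.Finite K gt]
    (T : LinearMap.BilinForm K gt)
    (hTnd : T.Nondegenerate)
    (hTsymm : ∀ x y : gt, T x y = T y x)
    (hTinv : ∀ x y z : gt, T ⁅x, y⁆ z = T x ⁅y, z⁆)
    (Dt : gt →ₗ[K] gt) (hDtbij : Function.Bijective Dt)
    (hDtder : ∀ x y : gt, Dt ⁅x, y⁆ = ⁅Dt x, y⁆ + ⁅x, Dt y⁆)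
    (hDtskew : ∀ x y : gt, T (Dt x) y = - T x (Dt y))
    (I : LieIdeal K gt)
    (hIdim : Module.finrank K I = 1)
    (hIcent : I ≤ LieAlgebra.center K gt)
    (hIinv : ∀ x ∈ I, Dt x ∈ I) :
    ∃ (g : Type v) (_ : LieRing g) (_ : LieAlgebra K g) (_ : Module.Finite K g)
      (B ω : LinearMap.BilinForm K g) (D δ : g →ₗ[K] g) (lam : K) (c : g),
      B.Nondegenerate ∧ (∀ x y : g, B x y = B y x) ∧
      (∀ x y z : g, B ⁅x, y⁆ z = B x ⁅y, z⁆) ∧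
      ω.Nondegenerate ∧ (∀ x : g, ω x x = 0) ∧
      (∀ x y z : g, ω ⁅x, y⁆ z + ω ⁅y, z⁆ x + ω ⁅z, x⁆ y = 0) ∧
      Function.Bijective D ∧
      (∀ x y : g, D ⁅x, y⁆ = ⁅D x, y⁆ + ⁅x, D y⁆) ∧
      (∀ x y : g, B (D x) y = - B x (D y)) ∧
      (∀ x y : g, ω x y = B (D x) y) ∧
      (∀ x y : g, δ ⁅x, y⁆ = ⁅δ x, y⁆ + ⁅x, δ y⁆) ∧
      (∀ x y : g, B (δ x) y = - B x (δ y)) ∧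
      lam ≠ 0 ∧
      (∀ x : g, δ (D x) - D (δ x) - lam • δ x = ⁅c, x⁆) ∧
      ∃ φ : gt ≃ₗ[K] K × g × K,
        (∀ p q : gt, φ ⁅p, q⁆ =
          (0, ⁅(φ p).2.1, (φ q).2.1⁆ + (φ p).1 • δ (φ q).2.1 - (φ q).1 • δ (φ p).2.1,
            B (δ (φ p).2.1) (φ q).2.1)) ∧
        (∀ p q : gt, T p q =
          B (φ p).2.1 (φ q).2.1 + (φ p).1 * (φ q).2.2 + (φ q).1 * (φ p).2.2) ∧
        (∀ p : gt, φ (Dt p) =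
          (-(lam * (φ p).1), D (φ p).2.1 - (φ p).1 • c,
            B c (φ p).2.1 + lam * (φ p).2.2)) := by
  obtain ⟨e', he'0, he'c, μ, hDe'⟩ := exists_central_eigenvector hIdim hIcent hIinv
  have hDt : IsSkewDerivation T Dt := ⟨hDtder, hDtskew⟩
  have hμ : μ ≠ 0 := by
    rintro rfl
    exact he'0 (hDtbij.1 (by rw [hDe', zero_smul, map_zero]))
  have he'e' := hDt.isotropic_of_eigenvector hTsymm hDe' hμ
  obtain ⟨e, he'e, hee⟩ := exists_isotropic_partner hTnd hTsymm he'0 he'e'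
  let H : CentralHyperbolicPair T := ⟨hTsymm, hTinv, e, e', he'c, he'e, hee, he'e'⟩
  have hB := H.restrict_nondegenerate hTnd
  have hD := H.compress_isSkewDerivation hDt hDe'
  have hδ := H.compress_isSkewDerivation (isSkewDerivation_ad hTinv e) (μ := 0)
    (by rw [ad_apply, he'c, zero_smul])
  have hDinj := H.compress_injective hDt hDe' hμ hDtbij.1
  have hDbij : Function.Bijective (H.compress Dt) :=
    ⟨hDinj, LinearMap.injective_iff_surjective.mp hDinj⟩
  refine ⟨H.orthogonal, inferInstance, inferInstance, inferInstance, T.restrict H.orthogonal,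
    T.restrict H.orthogonal ∘ₗ H.compress Dt, H.compress Dt, H.compress (ad K gt e), μ,
    H.defect Dt, hB, H.restrict_symm, H.restrict_invariant, hB.comp_of_bijective hDbij,
    hD.apply_self_eq_zero H.restrict_symm, hD.cocycle H.restrict_symm H.restrict_invariant,
    hDbij, hD.leibniz, hD.skew, fun _ _ => rfl, hδ.leibniz, hδ.skew, hμ,
    H.compress_ad_commutator hDt hDe', H.equiv, fun p q => ?_, H.form_eq, fun p => ?_⟩
  · rw [H.equiv_apply, H.form_lie_e', H.proj_lie, H.form_lie_e]
    rfl
  · rw [H.equiv_apply, H.form_apply_e' hDt hDe', H.proj_apply hDe', H.form_apply_e hDt hDe']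
    rfl

/-- A quadratic symplectic Lie algebra `(g̃, T, ω̃)` possessing a one-dimensional central ideal
invariant under the derivation `D̃` (with `ω̃ = T(D̃ ·, ·)`) is isomorphic to the quadratic
symplectic double extension of a quadratic symplectic Lie algebra `(g, B, ω)` by the
one-dimensional algebra by means of a pair `(δ, c)`. -/
theorem stmt_12 (K : Type u) [Field K] [CharZero K]
    (gt : Type v) [LieRing gt] [LieAlgebra K gt] [Module.Finite K gt]
    (T ωt : LinearMap.BilinForm K gt)
    (hTnd : T.Nondegenerate)
    (hTsymm : ∀ x y : gt, T x y = T y x)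
    (hTinv : ∀ x y z : gt, T ⁅x, y⁆ z = T x ⁅y, z⁆)
    (hωnd : ωt.Nondegenerate)
    (hωalt : ∀ x : gt, ωt x x = 0)
    (hωcocy : ∀ x y z : gt, ωt ⁅x, y⁆ z + ωt ⁅y, z⁆ x + ωt ⁅z, x⁆ y = 0)
    (Dt : gt →ₗ[K] gt) (hDtbij : Function.Bijective Dt)
    (hDtder : ∀ x y : gt, Dt ⁅x, y⁆ = ⁅Dt x, y⁆ + ⁅x, Dt y⁆)
    (hDtskew : ∀ x y : gt, T (Dt x) y = - T x (Dt y))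
    (hωT : ∀ x y : gt, ωt x y = T (Dt x) y)
    (I : LieIdeal K gt)
    (hIdim : Module.finrank K I = 1)
    (hIcent : I ≤ LieAlgebra.center K gt)
    (hIinv : ∀ x ∈ I, Dt x ∈ I) :
    ∃ (g : Type v) (_ : LieRing g) (_ : LieAlgebra K g) (_ : Module.Finite K g)
      (B ω : LinearMap.BilinForm K g) (D δ : g →ₗ[K] g) (lam : K) (c : g),
      B.Nondegenerate ∧ (∀ x y : g, B x y = B y x) ∧
      (∀ x y z : g, B ⁅x, y⁆ z = B x ⁅y, z⁆) ∧
      ω.Nondegenerate ∧ (∀ x : g, ω x x = 0) ∧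
      (∀ x y z : g, ω ⁅x, y⁆ z + ω ⁅y, z⁆ x + ω ⁅z, x⁆ y = 0) ∧
      Function.Bijective D ∧
      (∀ x y : g, D ⁅x, y⁆ = ⁅D x, y⁆ + ⁅x, D y⁆) ∧
      (∀ x y : g, B (D x) y = - B x (D y)) ∧
      (∀ x y : g, ω x y = B (D x) y) ∧
      (∀ x y : g, δ ⁅x, y⁆ = ⁅δ x, y⁆ + ⁅x, δ y⁆) ∧
      (∀ x y : g, B (δ x) y = - B x (δ y)) ∧
      lam ≠ 0 ∧
      (∀ x : g, δ (D x) - D (δ x) - lam • δ x = ⁅c, x⁆) ∧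
      ∃ φ : gt ≃ₗ[K] K × g × K,
        (∀ p q : gt, φ ⁅p, q⁆ =
          (0, ⁅(φ p).2.1, (φ q).2.1⁆ + (φ p).1 • δ (φ q).2.1 - (φ q).1 • δ (φ p).2.1,
            B (δ (φ p).2.1) (φ q).2.1)) ∧
        (∀ p q : gt, T p q =
          B (φ p).2.1 (φ q).2.1 + (φ p).1 * (φ q).2.2 + (φ q).1 * (φ p).2.2) ∧
        (∀ p : gt, φ (Dt p) =
          (-(lam * (φ p).1), D (φ p).2.1 - (φ p).1 • c,
            B c (φ p).2.1 + lam * (φ p).2.2)) :=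
  stmt_12_general K gt T hTnd hTsymm hTinv Dt hDtbij hDtder hDtskew I hIdim hIcent hIinv
end

section
/- Let (g = U' ⊕ V', B') be a Manin algebra of dimension n over a field K of characteristic 0. If z(g) ∩ U' ≠ {0} or z(g) ∩ V' ≠ {0} (z(g) denoting the centre of g), then there exist a Manin algebra (G = U ⊕ V, B) of dimension n − 2 and a derivation δ of G, skew-symmetric with respect to B, with δ(V) ⊆ V, such that (g = U' ⊕ V', B') is isomorphic to the double extension of (G = U ⊕ V, B) by the one-dimensional Lie algebra by means of δ, with Manin decomposition U ⊕ Ke* and V ⊕ Ke, via a Lie algebra isomorphism preserving the scalar products and carrying U' to U ⊕ Ke* and V' to V ⊕ Ke (possibly after interchanging the roles of U' and V'). -/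
/-!
A nonzero central `c ∈ U'` is isotropic, so nondegeneracy and `g = U' ⊕ V'` give an isotropic
`f ∈ V'` with `B' c f = 1`. Let `π` be the projection of `g` onto `W = (Kc ⊕ Kf)^⊥` along the
hyperbolic plane `Kc ⊕ Kf`. Since `c` is central, it is orthogonal to every bracket, so
`[x, y] = π [x, y] + B' f [x, y] • c`; hence `π [x, y]` is a Lie bracket on `W`, for which the
restriction of `B'` is an invariant scalar product and `ad f` a skew-symmetric derivation.
Decomposing `x = B' c x • f + π x + B' f x • c` identifies `g` with the double extension of `W` by
`ad f`. As `c ∈ U'` and `f ∈ V'` are isotropic, `π` preserves `U'` and `V'`, whose traces on `W`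
form a Manin decomposition of `W`.
-/

open LinearMap (BilinForm)

section

variable {K g : Type*} [CommRing K] [LieRing g] [LieAlgebra K g] {B : BilinForm K g}

lemma LinearMap.BilinForm.apply_lie_self_of_invariant
    (hinv : ∀ x y z : g, B ⁅x, y⁆ z = B x ⁅y, z⁆) (x y : g) : B x ⁅x, y⁆ = 0 := by
  rw [← hinv, lie_self, map_zero, LinearMap.zero_apply]

lemma LinearMap.BilinForm.lie_apply_of_invariant
    (hinv : ∀ x y z : g, B ⁅x, y⁆ z = B x ⁅y, z⁆) (x y z : g) : B ⁅x, y⁆ z = -B y ⁅x, z⁆ := by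
  rw [← lie_skew, map_neg, LinearMap.neg_apply, hinv]

lemma Submodule.isCompl_comap_subtype_of_projection {M : Type*} [AddCommGroup M] [Module K M]
    {W S T : Submodule K M} (p : M →ₗ[K] M) (hpW : ∀ x, p x ∈ W) (hp : ∀ x ∈ W, p x = x)
    (hS : ∀ x ∈ S, p x ∈ S) (hT : ∀ x ∈ T, p x ∈ T) (hST : IsCompl S T) :
    IsCompl (S.comap W.subtype) (T.comap W.subtype) := by
  refine ⟨Submodule.disjoint_def.2 fun x hxS hxT => Subtype.ext <|
    Submodule.disjoint_def.1 hST.disjoint x hxS hxT, codisjoint_iff.2 <| eq_top_iff.2 ?_⟩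
  rintro x -
  obtain ⟨a, ha, b, hb, hab⟩ := Submodule.mem_sup.1 (hST.codisjoint.eq_top ▸ Submodule.mem_top)
  have hx : p a + p b = x := by rw [← map_add, hab, hp x x.2]
  exact Submodule.mem_sup.2 ⟨⟨p a, hpW a⟩, hS a ha, ⟨p b, hpW b⟩, hT b hb, Subtype.ext hx⟩

def pairOrthogonal (B : BilinForm K g) (c f : g) : Submodule K g :=
  LinearMap.ker (B c) ⊓ LinearMap.ker (B f)

def pairProj (B : BilinForm K g) (c f : g) : g →ₗ[K] g :=
  LinearMap.id - (B f).smulRight c - (B c).smulRight f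

section pairProj

variable {c f x : g}

lemma mem_pairOrthogonal : x ∈ pairOrthogonal B c f ↔ B c x = 0 ∧ B f x = 0 := Iff.rfl

lemma pairProj_apply (x : g) : pairProj B c f x = x - B f x • c - B c x • f := rfl

lemma pairProj_of_mem (hx : x ∈ pairOrthogonal B c f) : pairProj B c f x = x := by
  rw [pairProj_apply, hx.1, hx.2, zero_smul, zero_smul, sub_zero, sub_zero]

variable (B c f) in
lemma eq_smul_add_pairProj_add_smul (x : g) : x = B c x • f + pairProj B c f x + B f x • c := by
  rw [pairProj_apply]; abel

lemma pairProj_comm : pairProj B f c = pairProj B c f := by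
  ext x; simp only [pairProj_apply, sub_right_comm]

lemma mem_iff_pairProj_mem_of_left_mem {S : Submodule K g}
    (hS : ∀ x ∈ S, ∀ y ∈ S, B x y = 0) (hc : c ∈ S) :
    x ∈ S ↔ B c x = 0 ∧ pairProj B c f x ∈ S := by
  refine ⟨fun hx => ⟨hS c hc x hx, ?_⟩, fun ⟨h0, hx⟩ => ?_⟩
  · rw [pairProj_apply, hS c hc x hx, zero_smul, sub_zero]
    exact S.sub_mem hx (S.smul_mem _ hc)
  · rw [eq_smul_add_pairProj_add_smul B c f x, h0, zero_smul, zero_add]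
    exact S.add_mem hx (S.smul_mem _ hc)

lemma mem_iff_pairProj_mem_of_right_mem {S : Submodule K g}
    (hS : ∀ x ∈ S, ∀ y ∈ S, B x y = 0) (hf : f ∈ S) :
    x ∈ S ↔ B f x = 0 ∧ pairProj B c f x ∈ S := by
  rw [← pairProj_comm]; exact mem_iff_pairProj_mem_of_left_mem hS hf

end pairProj

-- A class, so that the Lie algebra structure on `pairOrthogonal B c f` can be an instance.
class IsCentralHyperbolicPair (B : BilinForm K g) (c f : g) : Prop where
  symm : ∀ x y, B x y = B y x
  invariant : ∀ x y z, B ⁅x, y⁆ z = B x ⁅y, z⁆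
  mem_center : c ∈ LieAlgebra.center K g
  apply_c_c : B c c = 0
  apply_f_f : B f f = 0
  apply_c_f : B c f = 1

namespace IsCentralHyperbolicPair

variable {c f : g}

lemma lie_c (hp : IsCentralHyperbolicPair B c f) (x : g) : ⁅x, c⁆ = 0 :=
  (LieModule.mem_maxTrivSubmodule K g g c).1 hp.mem_center x

lemma c_lie (hp : IsCentralHyperbolicPair B c f) (x : g) : ⁅c, x⁆ = 0 := by
  rw [← lie_skew, hp.lie_c, neg_zero]

lemma apply_f_c (hp : IsCentralHyperbolicPair B c f) : B f c = 1 := by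
  rw [hp.symm, hp.apply_c_f]

lemma apply_c_lie (hp : IsCentralHyperbolicPair B c f) (x y : g) : B c ⁅x, y⁆ = 0 := by
  rw [← neg_eq_zero, ← B.lie_apply_of_invariant hp.invariant, hp.lie_c, map_zero,
    LinearMap.zero_apply]

lemma pairProj_mem (hp : IsCentralHyperbolicPair B c f) (x : g) :
    pairProj B c f x ∈ pairOrthogonal B c f := by
  simp [mem_pairOrthogonal, pairProj_apply, hp.apply_c_c, hp.apply_c_f, hp.apply_f_c, hp.apply_f_f]

lemma pairProj_c (hp : IsCentralHyperbolicPair B c f) : pairProj B c f c = 0 := by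
  rw [pairProj_apply, hp.apply_f_c, hp.apply_c_c, one_smul, zero_smul, sub_zero, sub_self]

lemma pairProj_f (hp : IsCentralHyperbolicPair B c f) : pairProj B c f f = 0 := by
  rw [pairProj_apply, hp.apply_f_f, hp.apply_c_f, one_smul, zero_smul, sub_zero, sub_self]

lemma f_lie_mem (hp : IsCentralHyperbolicPair B c f) (x : g) :
    ⁅f, x⁆ ∈ pairOrthogonal B c f :=
  ⟨hp.apply_c_lie f x, B.apply_lie_self_of_invariant hp.invariant f x⟩

lemma pairProj_lie (hp : IsCentralHyperbolicPair B c f) (x y : g) :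
    pairProj B c f ⁅x, y⁆ = ⁅x, y⁆ - B f ⁅x, y⁆ • c := by
  rw [pairProj_apply, hp.apply_c_lie, zero_smul, sub_zero]

lemma lie_pairProj_lie (hp : IsCentralHyperbolicPair B c f) (x y z : g) :
    ⁅x, pairProj B c f ⁅y, z⁆⁆ = ⁅x, ⁅y, z⁆⁆ := by
  rw [hp.pairProj_lie, lie_sub, lie_smul, hp.lie_c, smul_zero, sub_zero]

lemma pairProj_lie_lie (hp : IsCentralHyperbolicPair B c f) (x y z : g) :
    ⁅pairProj B c f ⁅x, y⁆, z⁆ = ⁅⁅x, y⁆, z⁆ := by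
  rw [hp.pairProj_lie, sub_lie, smul_lie, hp.c_lie, smul_zero, sub_zero]

lemma lie_eq_lie_pairProj_add (hp : IsCentralHyperbolicPair B c f) (p q : g) :
    ⁅p, q⁆ = ⁅pairProj B c f p, pairProj B c f q⁆ + B c p • ⁅f, pairProj B c f q⁆
      - B c q • ⁅f, pairProj B c f p⁆ := by
  conv_lhs => rw [eq_smul_add_pairProj_add_smul B c f p,
    eq_smul_add_pairProj_add_smul B c f q]
  simp only [add_lie, lie_add, smul_lie, lie_smul, hp.lie_c, hp.c_lie, lie_self, smul_zero,
    add_zero]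
  rw [← lie_skew f (pairProj B c f p)]
  module

lemma apply_pairProj_of_mem (hp : IsCentralHyperbolicPair B c f) {x : g}
    (hx : x ∈ pairOrthogonal B c f) (z : g) : B x (pairProj B c f z) = B x z := by
  rw [pairProj_apply, map_sub, map_sub, map_smul, map_smul, hp.symm x c, hx.1, hp.symm x f, hx.2,
    smul_zero, smul_zero, sub_zero, sub_zero]

variable [hp : IsCentralHyperbolicPair B c f]

instance : Bracket (pairOrthogonal B c f) (pairOrthogonal B c f) :=
  ⟨fun x y => ⟨pairProj B c f ⁅(x : g), (y : g)⁆, hp.pairProj_mem _⟩⟩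

lemma coe_lie (x y : pairOrthogonal B c f) :
    ((⁅x, y⁆ : pairOrthogonal B c f) : g) = pairProj B c f ⁅(x : g), (y : g)⁆ := rfl

instance : LieRing (pairOrthogonal B c f) where
  add_lie x y z := Subtype.ext <| by simp only [coe_lie, Submodule.coe_add, add_lie, map_add]
  lie_add x y z := Subtype.ext <| by simp only [coe_lie, Submodule.coe_add, lie_add, map_add]
  lie_self x := Subtype.ext <| by simp only [coe_lie, lie_self, map_zero, Submodule.coe_zero]
  leibniz_lie x y z := Subtype.ext <| by
    simp only [coe_lie, Submodule.coe_add, hp.lie_pairProj_lie, hp.pairProj_lie_lie, ← map_add,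
      ← leibniz_lie]

instance : LieAlgebra K (pairOrthogonal B c f) where
  lie_smul t x y := Subtype.ext <| by
    simp only [coe_lie, Submodule.coe_smul, lie_smul, map_smul]

variable (B c f) in
def pairDerivation : LieDerivation K (pairOrthogonal B c f) (pairOrthogonal B c f) where
  toLinearMap := LinearMap.codRestrict _ ((LieAlgebra.ad K g f : g →ₗ[K] g) ∘ₗ Submodule.subtype _)
    fun x => hp.f_lie_mem x
  leibniz' x y := Subtype.ext <| by
    change ⁅f, pairProj B c f ⁅(x : g), (y : g)⁆⁆ =
      pairProj B c f ⁅(x : g), ⁅f, (y : g)⁆⁆ - pairProj B c f ⁅(y : g), ⁅f, (x : g)⁆⁆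
    rw [hp.lie_pairProj_lie, ← pairProj_of_mem (hp.f_lie_mem ⁅(x : g), (y : g)⁆), leibniz_lie,
      map_add, ← lie_skew (y : g), map_neg, sub_neg_eq_add, add_comm]

lemma coe_pairDerivation (x : pairOrthogonal B c f) :
    (pairDerivation B c f x : g) = ⁅f, (x : g)⁆ := rfl

lemma restrict_invariant (x y z : pairOrthogonal B c f) :
    B.restrict _ ⁅x, y⁆ z = B.restrict _ x ⁅y, z⁆ := by
  change B (pairProj B c f _) z = B x (pairProj B c f _)
  rw [hp.symm, hp.apply_pairProj_of_mem z.2, hp.apply_pairProj_of_mem x.2, hp.symm, hp.invariant]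

lemma restrict_pairDerivation (x y : pairOrthogonal B c f) :
    B.restrict _ (pairDerivation B c f x) y = -B.restrict _ x (pairDerivation B c f y) := by
  change B ⁅f, (x : g)⁆ y = -B x ⁅f, (y : g)⁆
  rw [B.lie_apply_of_invariant hp.invariant, hp.symm (x : g)]

lemma restrict_nondegenerate (hB : B.Nondegenerate) :
    (B.restrict (pairOrthogonal B c f)).Nondegenerate := by
  have hL : (B.restrict (pairOrthogonal B c f)).SeparatingLeft := fun x hx =>
    Subtype.ext <| hB.1 x fun z => by
      rw [← hp.apply_pairProj_of_mem x.2]; exact hx ⟨_, hp.pairProj_mem z⟩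
  exact ⟨hL, fun x hx => hL x fun y => (hp.symm _ _).trans (hx y)⟩

variable (B c f) in
def toDoubleExtension : g ≃ₗ[K] K × pairOrthogonal B c f × K :=
  LinearEquiv.ofLinearMap
    ((B c).prod (((pairProj B c f).codRestrict _ hp.pairProj_mem).prod (B f)))
    ((LinearMap.fst K K _).smulRight f
      + (pairOrthogonal B c f).subtype ∘ₗ LinearMap.fst K _ K ∘ₗ LinearMap.snd K K _
      + (LinearMap.snd K _ K ∘ₗ LinearMap.snd K K _).smulRight c)
    (LinearMap.ext fun ⟨a, w, b⟩ => by
      refine Prod.ext ?_ (Prod.ext (Subtype.ext ?_) ?_)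
      · simp [hp.apply_c_f, hp.apply_c_c, (mem_pairOrthogonal.1 w.2).1]
      · simp [hp.pairProj_f, hp.pairProj_c, pairProj_of_mem w.2]
      · simp [hp.apply_f_f, hp.apply_f_c, (mem_pairOrthogonal.1 w.2).2])
    (LinearMap.ext fun x => (eq_smul_add_pairProj_add_smul B c f x).symm)

lemma toDoubleExtension_apply (x : g) :
    toDoubleExtension B c f x = (B c x, ⟨pairProj B c f x, hp.pairProj_mem x⟩, B f x) := rfl

lemma toDoubleExtension_lie (p q : g) :
    toDoubleExtension B c f ⁅p, q⁆ =
      (0, ⁅(toDoubleExtension B c f p).2.1, (toDoubleExtension B c f q).2.1⁆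
          + (toDoubleExtension B c f p).1 • pairDerivation B c f (toDoubleExtension B c f q).2.1
          - (toDoubleExtension B c f q).1 • pairDerivation B c f (toDoubleExtension B c f p).2.1,
        B.restrict _ (pairDerivation B c f (toDoubleExtension B c f p).2.1)
          (toDoubleExtension B c f q).2.1) := by
  have hf_lie (x : g) : pairProj B c f ⁅f, x⁆ = ⁅f, x⁆ := pairProj_of_mem (hp.f_lie_mem x)
  simp only [toDoubleExtension_apply, hp.apply_c_lie]
  refine Prod.ext rfl (Prod.ext (Subtype.ext ?_) ?_)
  · change pairProj B c f ⁅p, q⁆ = pairProj B c f ⁅pairProj B c f p, pairProj B c f q⁆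
      + B c p • ⁅f, pairProj B c f q⁆ - B c q • ⁅f, pairProj B c f p⁆
    rw [hp.lie_eq_lie_pairProj_add p q, map_sub, map_add, map_smul, map_smul, hf_lie, hf_lie]
  · change B f ⁅p, q⁆ = B ⁅f, pairProj B c f p⁆ (pairProj B c f q)
    rw [hp.lie_eq_lie_pairProj_add p q, map_sub, map_add, map_smul, map_smul, hp.invariant,
      B.apply_lie_self_of_invariant hp.invariant, B.apply_lie_self_of_invariant hp.invariant,
      smul_zero, smul_zero, add_zero, sub_zero]

lemma toDoubleExtension_form (p q : g) :
    B p q = B.restrict _ (toDoubleExtension B c f p).2.1 (toDoubleExtension B c f q).2.1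
      + (toDoubleExtension B c f p).1 * (toDoubleExtension B c f q).2.2
      + (toDoubleExtension B c f q).1 * (toDoubleExtension B c f p).2.2 := by
  change B p q = B (pairProj B c f p) (pairProj B c f q) + B c p * B f q + B c q * B f p
  rw [hp.apply_pairProj_of_mem (hp.pairProj_mem p), hp.symm (pairProj B c f p) q, pairProj_apply,
    map_sub, map_sub, map_smul, map_smul, smul_eq_mul, smul_eq_mul, hp.symm q p, hp.symm q c,
    hp.symm q f]
  ring

end IsCentralHyperbolicPair

variable {c f : g} [IsCentralHyperbolicPair B c f]

def pairSubalgebra (S : LieSubalgebra K g) (hS : ∀ x ∈ S, pairProj B c f x ∈ S) :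
    LieSubalgebra K (pairOrthogonal B c f) :=
  { S.toSubmodule.comap (pairOrthogonal B c f).subtype with
    lie_mem' := fun hx hy => hS _ (S.lie_mem hx hy) }

end

section

variable {K g : Type*} [Field K] [LieRing g] [LieAlgebra K g]

lemma IsCentralHyperbolicPair.finrank_pairOrthogonal [Module.Finite K g] {B : BilinForm K g}
    {c f : g} [IsCentralHyperbolicPair B c f] :
    Module.finrank K (pairOrthogonal B c f) = Module.finrank K g - 2 := by
  rw [(IsCentralHyperbolicPair.toDoubleExtension B c f).finrank_eq, Module.finrank_prod,
    Module.finrank_prod, Module.finrank_self]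
  omega

lemma LinearMap.BilinForm.exists_mem_apply_eq_one_of_isCompl {M : Type*} [AddCommGroup M]
    [Module K M] {B : BilinForm K M} (hB : B.Nondegenerate)
    {U V : Submodule K M} (hUV : IsCompl U V) (hU : ∀ x ∈ U, ∀ y ∈ U, B x y = 0)
    {c : M} (hc : c ∈ U) (hc0 : c ≠ 0) : ∃ f ∈ V, B c f = 1 := by
  obtain ⟨y, hy⟩ : ∃ y, B c y ≠ 0 := not_forall.1 fun h => hc0 (hB.1 c h)
  obtain ⟨u, hu, v, hv, rfl⟩ :=
    Submodule.mem_sup.1 (hUV.codisjoint.eq_top ▸ Submodule.mem_top : y ∈ U ⊔ V)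
  rw [map_add, hU c hc u hu, zero_add] at hy
  exact ⟨(B c v)⁻¹ • v, V.smul_mem _ hv, by rw [map_smul, smul_eq_mul, inv_mul_cancel₀ hy]⟩

end

theorem stmt_14_general (K : Type u) [Field K]
    (g : Type v) [LieRing g] [LieAlgebra K g] [Module.Finite K g]
    (B' : LinearMap.BilinForm K g)
    (hBnd : B'.Nondegenerate)
    (hBsymm : ∀ x y : g, B' x y = B' y x)
    (hBinv : ∀ x y z : g, B' ⁅x, y⁆ z = B' x ⁅y, z⁆)
    (U' V' : LieSubalgebra K g)
    (hUV' : IsCompl U'.toSubmodule V'.toSubmodule)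
    (hU'iso : ∀ x ∈ U', ∀ y ∈ U', B' x y = 0)
    (hV'iso : ∀ x ∈ V', ∀ y ∈ V', B' x y = 0)
    (hcent : (∃ x : g, x ∈ LieAlgebra.center K g ∧ x ∈ U' ∧ x ≠ 0) ∨
      (∃ x : g, x ∈ LieAlgebra.center K g ∧ x ∈ V' ∧ x ≠ 0)) :
    ∃ (G : Type v) (_ : LieRing G) (_ : LieAlgebra K G) (_ : Module.Finite K G)
      (B : LinearMap.BilinForm K G) (U V : LieSubalgebra K G) (δ : G →ₗ[K] G),
      B.Nondegenerate ∧ (∀ x y : G, B x y = B y x) ∧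
      (∀ x y z : G, B ⁅x, y⁆ z = B x ⁅y, z⁆) ∧
      IsCompl U.toSubmodule V.toSubmodule ∧
      (∀ x ∈ U, ∀ y ∈ U, B x y = 0) ∧
      (∀ x ∈ V, ∀ y ∈ V, B x y = 0) ∧
      Module.finrank K G = Module.finrank K g - 2 ∧
      (∀ x y : G, δ ⁅x, y⁆ = ⁅δ x, y⁆ + ⁅x, δ y⁆) ∧
      (∀ x y : G, B (δ x) y = - B x (δ y)) ∧
      (∀ x ∈ V, δ x ∈ V) ∧
      ∃ φ : g ≃ₗ[K] K × G × K,
        (∀ p q : g, φ ⁅p, q⁆ =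
          (0, ⁅(φ p).2.1, (φ q).2.1⁆ + (φ p).1 • δ (φ q).2.1 - (φ q).1 • δ (φ p).2.1,
            B (δ (φ p).2.1) (φ q).2.1)) ∧
        (∀ p q : g, B' p q =
          B (φ p).2.1 (φ q).2.1 + (φ p).1 * (φ q).2.2 + (φ q).1 * (φ p).2.2) ∧
        ((∀ x : g, (x ∈ U' ↔ ((φ x).1 = 0 ∧ (φ x).2.1 ∈ U)) ∧
            (x ∈ V' ↔ ((φ x).2.2 = 0 ∧ (φ x).2.1 ∈ V))) ∨
          (∀ x : g, (x ∈ V' ↔ ((φ x).1 = 0 ∧ (φ x).2.1 ∈ U)) ∧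
            (x ∈ U' ↔ ((φ x).2.2 = 0 ∧ (φ x).2.1 ∈ V)))) := by
  wlog hU : ∃ x : g, x ∈ LieAlgebra.center K g ∧ x ∈ U' ∧ x ≠ 0 generalizing U' V'
  · simpa only [or_comm] using
      this V' U' hUV'.symm hV'iso hU'iso hcent.symm (hcent.resolve_left hU)
  obtain ⟨c, hc, hcU, hc0⟩ := hU
  obtain ⟨f, hfV, hcf⟩ := B'.exists_mem_apply_eq_one_of_isCompl hBnd hUV' hU'iso hcU hc0
  have hp : IsCentralHyperbolicPair B' c f :=
    ⟨hBsymm, hBinv, hc, hU'iso c hcU c hcU, hV'iso f hfV f hfV, hcf⟩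
  have hU (x : g) : x ∈ U' ↔ B' c x = 0 ∧ pairProj B' c f x ∈ U' :=
    mem_iff_pairProj_mem_of_left_mem hU'iso hcU
  have hV (x : g) : x ∈ V' ↔ B' f x = 0 ∧ pairProj B' c f x ∈ V' :=
    mem_iff_pairProj_mem_of_right_mem hV'iso hfV
  refine ⟨pairOrthogonal B' c f, inferInstance, inferInstance, inferInstance, B'.restrict _,
    pairSubalgebra U' fun x hx => ((hU x).1 hx).2, pairSubalgebra V' fun x hx => ((hV x).1 hx).2,
    IsCentralHyperbolicPair.pairDerivation B' c f, hp.restrict_nondegenerate hBnd,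
    fun x y => hBsymm x y, hp.restrict_invariant,
    Submodule.isCompl_comap_subtype_of_projection _ hp.pairProj_mem (fun _ => pairProj_of_mem)
      (fun x hx => ((hU x).1 hx).2) (fun x hx => ((hV x).1 hx).2) hUV',
    fun x hx y hy => hU'iso _ hx _ hy, fun x hx y hy => hV'iso _ hx _ hy,
    hp.finrank_pairOrthogonal,
    fun x y => by rw [LieDerivation.coeFn_coe, LieDerivation.apply_lie_eq_add, add_comm],
    hp.restrict_pairDerivation, fun x hx => V'.lie_mem hfV hx,
    IsCentralHyperbolicPair.toDoubleExtension B' c f, hp.toDoubleExtension_lie,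
    hp.toDoubleExtension_form, Or.inl fun x => ⟨hU x, hV x⟩⟩

/-- If the centre of a Manin algebra `(g = U' ⊕ V', B')` of dimension `n` meets `U'` or `V'`
nontrivially, then `g` is (isometrically, compatibly with the Manin decompositions, possibly
after interchanging `U'` and `V'`) isomorphic to the double extension of a Manin algebra
`(G = U ⊕ V, B)` of dimension `n - 2` by the one-dimensional Lie algebra by means of a
skew-symmetric derivation `δ` with `δ(V) ⊆ V`. -/
theorem stmt_14 (K : Type u) [Field K] [CharZero K]
    (g : Type v) [LieRing g] [LieAlgebra K g] [Module.Finite K g]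
    (B' : LinearMap.BilinForm K g)
    (hBnd : B'.Nondegenerate)
    (hBsymm : ∀ x y : g, B' x y = B' y x)
    (hBinv : ∀ x y z : g, B' ⁅x, y⁆ z = B' x ⁅y, z⁆)
    (U' V' : LieSubalgebra K g)
    (hUV' : IsCompl U'.toSubmodule V'.toSubmodule)
    (hU'iso : ∀ x ∈ U', ∀ y ∈ U', B' x y = 0)
    (hV'iso : ∀ x ∈ V', ∀ y ∈ V', B' x y = 0)
    (hcent : (∃ x : g, x ∈ LieAlgebra.center K g ∧ x ∈ U' ∧ x ≠ 0) ∨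
      (∃ x : g, x ∈ LieAlgebra.center K g ∧ x ∈ V' ∧ x ≠ 0)) :
    ∃ (G : Type v) (_ : LieRing G) (_ : LieAlgebra K G) (_ : Module.Finite K G)
      (B : LinearMap.BilinForm K G) (U V : LieSubalgebra K G) (δ : G →ₗ[K] G),
      B.Nondegenerate ∧ (∀ x y : G, B x y = B y x) ∧
      (∀ x y z : G, B ⁅x, y⁆ z = B x ⁅y, z⁆) ∧
      IsCompl U.toSubmodule V.toSubmodule ∧
      (∀ x ∈ U, ∀ y ∈ U, B x y = 0) ∧
      (∀ x ∈ V, ∀ y ∈ V, B x y = 0) ∧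
      Module.finrank K G = Module.finrank K g - 2 ∧
      (∀ x y : G, δ ⁅x, y⁆ = ⁅δ x, y⁆ + ⁅x, δ y⁆) ∧
      (∀ x y : G, B (δ x) y = - B x (δ y)) ∧
      (∀ x ∈ V, δ x ∈ V) ∧
      ∃ φ : g ≃ₗ[K] K × G × K,
        (∀ p q : g, φ ⁅p, q⁆ =
          (0, ⁅(φ p).2.1, (φ q).2.1⁆ + (φ p).1 • δ (φ q).2.1 - (φ q).1 • δ (φ p).2.1,
            B (δ (φ p).2.1) (φ q).2.1)) ∧
        (∀ p q : g, B' p q =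
          B (φ p).2.1 (φ q).2.1 + (φ p).1 * (φ q).2.2 + (φ q).1 * (φ p).2.2) ∧
        ((∀ x : g, (x ∈ U' ↔ ((φ x).1 = 0 ∧ (φ x).2.1 ∈ U)) ∧
            (x ∈ V' ↔ ((φ x).2.2 = 0 ∧ (φ x).2.1 ∈ V))) ∨
          (∀ x : g, (x ∈ V' ↔ ((φ x).1 = 0 ∧ (φ x).2.1 ∈ U)) ∧
            (x ∈ U' ↔ ((φ x).2.2 = 0 ∧ (φ x).2.1 ∈ V)))) :=
  stmt_14_general K g B' hBnd hBsymm hBinv U' V' hUV' hU'iso hV'iso hcent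
end

section
/- Let (g = U' ⊕ V', B') be a nonzero Manin algebra over a field K of characteristic 0. If g is a nilpotent Lie algebra, then z(g) ∩ U' ≠ {0} and z(g) ∩ V' ≠ {0}, where z(g) denotes the centre of g. -/
/-!
Put `W = U + [g, g]`. In a nilpotent Lie algebra a subalgebra that spans `g` modulo `[g, g]` is
all of `g`, and `U` is proper because it is isotropic, so `W` is proper and, `B` being
nondegenerate, some `x ≠ 0` is orthogonal to `W`. Orthogonality to `U` forces `x ∈ U`, since
`U ⊕ V` is a splitting into isotropic subspaces, and invariance turns orthogonality to `[g, g]`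
into `B [x, y] z = B x [y, z] = 0`, i.e. `x` is central. Exchanging `U` and `V` gives the rest.
-/

namespace LinearMap.BilinForm

variable {K M : Type*} [Field K] [AddCommGroup M] [Module K M] {B : LinearMap.BilinForm K M}

theorem exists_ne_zero_forall_apply_eq_zero [FiniteDimensional K M] (hB : B.Nondegenerate)
    {W : Submodule K M} (hW : W ≠ ⊤) : ∃ x ≠ 0, ∀ w ∈ W, B x w = 0 := by
  obtain ⟨f, hf, hfW⟩ := W.exists_dual_map_eq_bot_of_lt_top hW.lt_top inferInstance
  refine ⟨(B.toDual hB).symm f, by simpa using hf, fun w hw => ?_⟩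
  rw [apply_toDual_symm_apply, ← Submodule.mem_bot K, ← hfW]
  exact Submodule.mem_map_of_mem hw

theorem ne_top_of_isotropic [Nontrivial M] (hB : B.SeparatingLeft) {U : Submodule K M}
    (hU : ∀ x ∈ U, ∀ y ∈ U, B x y = 0) : U ≠ ⊤ := by
  rintro rfl
  exact hB.ne_zero (ext fun x y => hU x trivial y trivial)

theorem mem_of_isCompl_of_isotropic (hB : B.SeparatingLeft) {U V : Submodule K M}
    (hUV : IsCompl U V) (hU : ∀ x ∈ U, ∀ y ∈ U, B x y = 0) (hV : ∀ x ∈ V, ∀ y ∈ V, B x y = 0)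
    {x : M} (hx : ∀ u ∈ U, B x u = 0) : x ∈ U := by
  have hsplit : ∀ z : M, ∃ u ∈ U, ∃ v ∈ V, u + v = z := fun z =>
    Submodule.mem_sup.mp (hUV.sup_eq_top ▸ Submodule.mem_top)
  obtain ⟨u, hu, v, hv, rfl⟩ := hsplit x
  suffices v = 0 by simpa [this] using hu
  refine hB v fun z => ?_
  obtain ⟨p, hp, q, hq, rfl⟩ := hsplit z
  have hvp : B v p = 0 := by
    have := hx p hp
    rwa [add_left, hU u hu p hp, zero_add] at this
  rw [map_add, hvp, hV v hv q hq, add_zero]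

end LinearMap.BilinForm

namespace LieSubalgebra

variable {R L : Type*} [CommRing R] [LieRing L] [LieAlgebra R L]

open LieModule

theorem lie_mem_sup_lie_of_mem_sup (U : LieSubalgebra R L) (I : LieIdeal R L) {x y : L}
    (hx : x ∈ U.toSubmodule ⊔ I.toSubmodule) (hy : y ∈ U.toSubmodule ⊔ I.toSubmodule) :
    ⁅x, y⁆ ∈ U.toSubmodule ⊔ (⁅(⊤ : LieIdeal R L), I⁆ : LieIdeal R L).toSubmodule := by
  obtain ⟨a, ha, b, hb, rfl⟩ := Submodule.mem_sup.mp hx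
  obtain ⟨c, hc, d, hd, rfl⟩ := Submodule.mem_sup.mp hy
  have hlie : ∀ {z w : L}, w ∈ I → ⁅z, w⁆ ∈ ⁅(⊤ : LieIdeal R L), I⁆ := fun hw =>
    LieSubmodule.lie_mem_lie (LieSubmodule.mem_top _) hw
  rw [add_lie, lie_add, ← lie_skew b]
  refine add_mem (add_mem (Submodule.mem_sup_left (U.lie_mem ha hc)) ?_) ?_
  · exact Submodule.mem_sup_right (hlie hd)
  · exact Submodule.mem_sup_right (neg_mem (hlie hb))

theorem sup_lowerCentralSeries_eq_top (U : LieSubalgebra R L)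
    (hU : U.toSubmodule ⊔ (lowerCentralSeries R L L 1).toSubmodule = ⊤) (k : ℕ) :
    U.toSubmodule ⊔ (lowerCentralSeries R L L k).toSubmodule = ⊤ := by
  induction k with
  | zero => simp
  | succ k ih =>
    rw [eq_top_iff, ← hU]
    refine sup_le le_sup_left ?_
    rw [lowerCentralSeries_succ, lowerCentralSeries_zero, LieSubmodule.lieIdeal_oper_eq_linear_span',
      Submodule.span_le]
    rintro - ⟨x, -, y, -, rfl⟩
    rw [SetLike.mem_coe, lowerCentralSeries_succ]
    exact U.lie_mem_sup_lie_of_mem_sup _ (ih ▸ Submodule.mem_top) (ih ▸ Submodule.mem_top)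

theorem toSubmodule_eq_top_of_sup_lowerCentralSeries_eq_top [IsNilpotent L L]
    (U : LieSubalgebra R L) (hU : U.toSubmodule ⊔ (lowerCentralSeries R L L 1).toSubmodule = ⊤) :
    U.toSubmodule = ⊤ := by
  obtain ⟨k, hk⟩ := (isNilpotent_iff R L L).mp ‹_›
  simpa [hk] using U.sup_lowerCentralSeries_eq_top hU k

end LieSubalgebra

theorem LieAlgebra.mem_center_of_forall_apply_lie_eq_zero {R L : Type*} [CommRing R] [LieRing L]
    [LieAlgebra R L] {B : LinearMap.BilinForm R L} (hB : B.SeparatingLeft)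
    (hBinv : ∀ x y z : L, B ⁅x, y⁆ z = B x ⁅y, z⁆) {x : L} (hx : ∀ y z : L, B x ⁅y, z⁆ = 0) :
    x ∈ LieAlgebra.center R L := by
  rw [LieModule.mem_maxTrivSubmodule]
  intro y
  rw [← lie_skew, neg_eq_zero]
  exact hB _ fun z => (hBinv x y z).trans (hx y z)

section QuadraticLieAlgebra

variable {K g : Type*} [Field K] [LieRing g] [LieAlgebra K g] {B : LinearMap.BilinForm K g}

open LieModule

theorem exists_ne_zero_mem_center_mem_of_isCompl_of_isotropic [FiniteDimensional K g]
    [Nontrivial g] [IsNilpotent g g] (hB : B.Nondegenerate)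
    (hBinv : ∀ x y z : g, B ⁅x, y⁆ z = B x ⁅y, z⁆) {U V : LieSubalgebra K g}
    (hUV : IsCompl U.toSubmodule V.toSubmodule) (hU : ∀ x ∈ U, ∀ y ∈ U, B x y = 0)
    (hV : ∀ x ∈ V, ∀ y ∈ V, B x y = 0) :
    ∃ x : g, x ∈ LieAlgebra.center K g ∧ x ∈ U ∧ x ≠ 0 := by
  set W := U.toSubmodule ⊔ (lowerCentralSeries K g g 1).toSubmodule
  have hW : W ≠ ⊤ := fun hW =>
    B.ne_top_of_isotropic hB.1 hU (U.toSubmodule_eq_top_of_sup_lowerCentralSeries_eq_top hW)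
  obtain ⟨x, hx0, hxW⟩ := B.exists_ne_zero_forall_apply_eq_zero hB hW
  have hxU : x ∈ U := B.mem_of_isCompl_of_isotropic hB.1 hUV hU hV fun u hu =>
    hxW u (Submodule.mem_sup_left hu)
  refine ⟨x, LieAlgebra.mem_center_of_forall_apply_lie_eq_zero hB.1 hBinv fun y z => ?_, hxU, hx0⟩
  refine hxW _ (Submodule.mem_sup_right ?_)
  rw [LieSubmodule.mem_toSubmodule, lowerCentralSeries_succ, lowerCentralSeries_zero]
  exact LieSubmodule.lie_mem_lie (LieSubmodule.mem_top y) (LieSubmodule.mem_top z)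

end QuadraticLieAlgebra

theorem stmt_15_general (K : Type*) [Field K]
    (g : Type*) [LieRing g] [LieAlgebra K g] [Module.Finite K g] [Nontrivial g]
    (B' : LinearMap.BilinForm K g)
    (hBnd : B'.Nondegenerate)
    (hBinv : ∀ x y z : g, B' ⁅x, y⁆ z = B' x ⁅y, z⁆)
    (U' V' : LieSubalgebra K g)
    (hUV' : IsCompl U'.toSubmodule V'.toSubmodule)
    (hU'iso : ∀ x ∈ U', ∀ y ∈ U', B' x y = 0)
    (hV'iso : ∀ x ∈ V', ∀ y ∈ V', B' x y = 0)
    (hnilp : LieRing.IsNilpotent g) :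
    (∃ x : g, x ∈ LieAlgebra.center K g ∧ x ∈ U' ∧ x ≠ 0) ∧
    (∃ x : g, x ∈ LieAlgebra.center K g ∧ x ∈ V' ∧ x ≠ 0) :=
  ⟨exists_ne_zero_mem_center_mem_of_isCompl_of_isotropic hBnd hBinv hUV' hU'iso hV'iso,
    exists_ne_zero_mem_center_mem_of_isCompl_of_isotropic hBnd hBinv hUV'.symm hV'iso hU'iso⟩

/-- If a nonzero Manin algebra `(g = U' ⊕ V', B')` is nilpotent, then the centre of `g`
intersects both `U'` and `V'` nontrivially. -/
theorem stmt_15 (K : Type*) [Field K] [CharZero K]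
    (g : Type*) [LieRing g] [LieAlgebra K g] [Module.Finite K g] [Nontrivial g]
    (B' : LinearMap.BilinForm K g)
    (hBnd : B'.Nondegenerate)
    (hBsymm : ∀ x y : g, B' x y = B' y x)
    (hBinv : ∀ x y z : g, B' ⁅x, y⁆ z = B' x ⁅y, z⁆)
    (U' V' : LieSubalgebra K g)
    (hUV' : IsCompl U'.toSubmodule V'.toSubmodule)
    (hU'iso : ∀ x ∈ U', ∀ y ∈ U', B' x y = 0)
    (hV'iso : ∀ x ∈ V', ∀ y ∈ V', B' x y = 0)
    (hnilp : LieRing.IsNilpotent g) :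
    (∃ x : g, x ∈ LieAlgebra.center K g ∧ x ∈ U' ∧ x ≠ 0) ∧
    (∃ x : g, x ∈ LieAlgebra.center K g ∧ x ∈ V' ∧ x ≠ 0) :=
  stmt_15_general K g B' hBnd hBinv U' V' hUV' hU'iso hV'iso hnilp
end

section
/- Let (g,B,ω) be a quadratic symplectic Lie algebra over an algebraically closed field K of characteristic 0. Then there exist two Lie subalgebras U and V of g such that g = U ⊕ V as vector spaces, B(U,U) = B(V,V) = {0} and ω(U,U) = ω(V,V) = {0}; that is, (g = U ⊕ V, B, ω) is a special symplectic Manin algebra. -/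
/-!
Nondegeneracy of `B` turns `ω` into an endomorphism `δ` with `ω x y = B (δ x) y`; the cocycle
identity and the invariance of `B` make `δ` a derivation, nondegeneracy of `ω` makes it
invertible, and `δ` is skew for both `B` and `ω`. For a skew derivation, generalized eigenspaces
multiply additively (`[g_a, g_b] ⊆ g_(a+b)`) and `g_a ⊥ g_b` unless `a + b = 0`. Choosing a
`ℚ`-linear functional `φ : K → ℚ` vanishing at no eigenvalue (all eigenvalues are nonzero), the
sums of the `g_a` with `φ a > 0`, resp. `φ a < 0`, are complementary subalgebras on which both
forms vanish.
-/

open Module End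

namespace Module.End

variable {R M : Type*} [CommRing R] [AddCommGroup M] [Module R M]

lemma mem_maxGenEigenspace_of_sub_smul_apply_mem {f : End R M} {μ : R} {x : M}
    (hx : (f - μ • 1) x ∈ f.maxGenEigenspace μ) : x ∈ f.maxGenEigenspace μ := by
  obtain ⟨k, hk⟩ := (mem_maxGenEigenspace _ _ _).mp hx
  exact (mem_maxGenEigenspace _ _ _).mpr ⟨k + 1, by rwa [pow_succ, mul_apply]⟩

lemma apply_mem_maxGenEigenspace_add {N P : Type*} [AddCommGroup N] [Module R N]
    [AddCommGroup P] [Module R P] (β : M →ₗ[R] N →ₗ[R] P) {f : End R M} {g : End R N}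
    {h : End R P} (hβ : ∀ x y, h (β x y) = β (f x) y + β x (g y)) {a b : R} {x : M} {y : N}
    (hx : x ∈ f.maxGenEigenspace a) (hy : y ∈ g.maxGenEigenspace b) :
    β x y ∈ h.maxGenEigenspace (a + b) := by
  obtain ⟨k, hk⟩ := (mem_maxGenEigenspace _ _ _).mp hx
  induction k generalizing x y with
  | zero => simp_all
  | succ k ihk =>
    obtain ⟨l, hl⟩ := (mem_maxGenEigenspace _ _ _).mp hy
    induction l generalizing y with
    | zero => simp_all
    | succ l ihl =>
      have hstep : (h - (a + b) • 1) (β x y) = β ((f - a • 1) x) y + β x ((g - b • 1) y) := by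
        simp only [LinearMap.sub_apply, LinearMap.smul_apply, one_apply, hβ, map_sub,
          map_smul, add_smul, LinearMap.add_apply]
        abel
      have hx' : ((f - a • 1) ^ k) ((f - a • 1) x) = 0 := by rwa [← mul_apply, ← pow_succ]
      have hy' : ((g - b • 1) ^ l) ((g - b • 1) y) = 0 := by rwa [← mul_apply, ← pow_succ]
      refine mem_maxGenEigenspace_of_sub_smul_apply_mem ?_
      rw [hstep]
      exact add_mem (ihk ((mem_maxGenEigenspace _ _ _).mpr ⟨k, hx'⟩) hy hx')
        (ihl ((mem_maxGenEigenspace _ _ _).mpr ⟨l, hy'⟩) hy')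

lemma eq_zero_of_mem_maxGenEigenspace_zero [IsDomain R] {μ : R} (hμ : μ ≠ 0) {r : R}
    (hr : r ∈ (0 : End R R).maxGenEigenspace μ) : r = 0 := by
  obtain ⟨k, hk⟩ := (mem_maxGenEigenspace _ _ _).mp hr
  have h0 : (0 - μ • 1 : End R R) = algebraMap R (End R R) (-μ) := by ext; simp
  rw [h0, ← map_pow, algebraMap_end_apply, smul_eq_mul] at hk
  exact (mul_eq_zero.mp hk).resolve_left (pow_ne_zero k (neg_ne_zero.mpr hμ))

lemma exists_rat_dual_forall_hasEigenvalue_ne_zero {K V : Type*} [Field K] [CharZero K]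
    [AddCommGroup V] [Module K V] [FiniteDimensional K V] {f : End K V}
    (hf : Function.Injective f) : ∃ φ : K →ₗ[ℚ] ℚ, ∀ c, f.HasEigenvalue c → φ c ≠ 0 := by
  have hne : ∀ c : f.Eigenvalues, (c : K) ≠ 0 := by
    intro c hc0
    have hc : f.HasEigenvalue 0 := hc0 ▸ c.property
    rw [hasEigenvalue_iff, eigenspace_zero, LinearMap.ker_eq_bot.mpr hf] at hc
    exact hc rfl
  obtain ⟨φ, hφ⟩ := Module.exists_dual_forall_apply_ne_zero (K := ℚ) _ hne
  exact ⟨φ, fun c hc => hφ ⟨c, hc⟩⟩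

end Module.End

lemma LinearMap.BilinForm.apply_eq_zero_of_mem_maxGenEigenspace {R M : Type*} [CommRing R]
    [IsDomain R] [AddCommGroup M] [Module R M] (β : LinearMap.BilinForm R M) {δ : End R M}
    (hδ : ∀ x y, β (δ x) y = -β x (δ y)) {a b : R} (hab : a + b ≠ 0) {x y : M}
    (hx : x ∈ δ.maxGenEigenspace a) (hy : y ∈ δ.maxGenEigenspace b) : β x y = 0 :=
  eq_zero_of_mem_maxGenEigenspace_zero hab <|
    apply_mem_maxGenEigenspace_add β (h := 0) (fun x y => by simp [hδ]) hx hy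

lemma LieAlgebra.lie_mem_maxGenEigenspace_add {R L : Type*} [CommRing R] [LieRing L]
    [LieAlgebra R L] {δ : End R L} (hδ : ∀ x y : L, δ ⁅x, y⁆ = ⁅δ x, y⁆ + ⁅x, δ y⁆)
    {a b : R} {x y : L} (hx : x ∈ δ.maxGenEigenspace a) (hy : y ∈ δ.maxGenEigenspace b) :
    ⁅x, y⁆ ∈ δ.maxGenEigenspace (a + b) :=
  apply_mem_maxGenEigenspace_add (LieModule.toEnd R L L : L →ₗ[R] End R L) hδ hx hy

lemma Submodule.apply_mem_of_mem_biSup {R M N P ι : Type*} [CommRing R] [AddCommGroup M]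
    [Module R M] [AddCommGroup N] [Module R N] [AddCommGroup P] [Module R P]
    {β : M →ₗ[R] N →ₗ[R] P} {p : ι → Submodule R M} {q : ι → Submodule R N} {s t : Set ι}
    {W : Submodule R P} (h : ∀ i ∈ s, ∀ j ∈ t, ∀ x ∈ p i, ∀ y ∈ q j, β x y ∈ W) {x : M} {y : N}
    (hx : x ∈ ⨆ i ∈ s, p i) (hy : y ∈ ⨆ j ∈ t, q j) : β x y ∈ W := by
  refine Submodule.map₂_le.mp ?_ x hx y hy
  simp_rw [map₂_iSup_left, map₂_iSup_right, iSup_le_iff, map₂_le]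
  exact h

namespace LieAlgebra

variable {K L : Type*} [Field K] [CharZero K] [LieRing L] [LieAlgebra K L] {δ : End K L}

def positiveGenEigenSubalgebra (hδ : ∀ x y : L, δ ⁅x, y⁆ = ⁅δ x, y⁆ + ⁅x, δ y⁆)
    (φ : K →ₗ[ℚ] ℚ) : LieSubalgebra K L where
  toSubmodule := ⨆ c ∈ {c | 0 < φ c}, δ.maxGenEigenspace c
  lie_mem' hx hy := Submodule.apply_mem_of_mem_biSup
    (β := (LieModule.toEnd K L L : L →ₗ[K] End K L))
    (fun c hc d hd _ hx _ hy => le_biSup (fun c => δ.maxGenEigenspace c)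
      (show 0 < φ (c + d) by rw [map_add]; exact add_pos hc hd)
      (lie_mem_maxGenEigenspace_add hδ hx hy)) hx hy

section

variable (hδ : ∀ x y : L, δ ⁅x, y⁆ = ⁅δ x, y⁆ + ⁅x, δ y⁆) (φ : K →ₗ[ℚ] ℚ)

lemma apply_eq_zero_of_mem_positiveGenEigenSubalgebra (β : LinearMap.BilinForm K L)
    (hβ : ∀ x y, β (δ x) y = -β x (δ y)) {x y : L} (hx : x ∈ positiveGenEigenSubalgebra hδ φ)
    (hy : y ∈ positiveGenEigenSubalgebra hδ φ) : β x y = 0 := by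
  rw [← Submodule.mem_bot K]
  refine Submodule.apply_mem_of_mem_biSup (fun c hc d hd x hx y hy => ?_) hx hy
  refine (Submodule.mem_bot K).mpr (β.apply_eq_zero_of_mem_maxGenEigenspace hβ ?_ hx hy)
  intro hcd
  have := add_pos (α := ℚ) hc hd
  rw [← map_add, hcd, map_zero] at this
  exact this.false

lemma disjoint_positiveGenEigenSubalgebra_neg :
    Disjoint (positiveGenEigenSubalgebra hδ φ).toSubmodule
      (positiveGenEigenSubalgebra hδ (-φ)).toSubmodule :=
  (independent_maxGenEigenspace δ).disjoint_biSup_biSup <|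
    Set.disjoint_left.mpr fun c (hc : 0 < φ c) (hc' : 0 < (-φ) c) => by
      rw [LinearMap.neg_apply] at hc'
      linarith

lemma codisjoint_positiveGenEigenSubalgebra_neg [IsAlgClosed K] [FiniteDimensional K L]
    (hφ : ∀ c, δ.HasEigenvalue c → φ c ≠ 0) :
    Codisjoint (positiveGenEigenSubalgebra hδ φ).toSubmodule
      (positiveGenEigenSubalgebra hδ (-φ)).toSubmodule := by
  rw [codisjoint_iff, eq_top_iff, ← iSup_maxGenEigenspace_eq_top δ]
  refine iSup_le fun c => ?_
  by_cases hc : δ.maxGenEigenspace c = ⊥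
  · simp [hc]
  have hcφ : φ c ≠ 0 := hφ c ((hasUnifEigenvalue_iff_hasUnifEigenvalue_one (by simp)).mp hc)
  rcases hcφ.lt_or_gt with hneg | hpos
  · refine le_sup_of_le_right (le_biSup (fun c => δ.maxGenEigenspace c) ?_)
    show 0 < (-φ) c
    rw [LinearMap.neg_apply]
    linarith
  · exact le_sup_of_le_left (le_biSup (fun c => δ.maxGenEigenspace c) hpos)

end

theorem exists_isCompl_isotropic_of_injective_derivation [IsAlgClosed K] [FiniteDimensional K L]
    (hδ : ∀ x y : L, δ ⁅x, y⁆ = ⁅δ x, y⁆ + ⁅x, δ y⁆) (hinj : Function.Injective δ) :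
    ∃ U V : LieSubalgebra K L, IsCompl U.toSubmodule V.toSubmodule ∧
      ∀ β : LinearMap.BilinForm K L, (∀ x y, β (δ x) y = -β x (δ y)) →
        (∀ x ∈ U, ∀ y ∈ U, β x y = 0) ∧ (∀ x ∈ V, ∀ y ∈ V, β x y = 0) := by
  obtain ⟨φ, hφ⟩ := exists_rat_dual_forall_hasEigenvalue_ne_zero hinj
  refine ⟨positiveGenEigenSubalgebra hδ φ, positiveGenEigenSubalgebra hδ (-φ),
    ⟨disjoint_positiveGenEigenSubalgebra_neg hδ φ,
      codisjoint_positiveGenEigenSubalgebra_neg hδ φ hφ⟩, fun β hβ => ⟨?_, ?_⟩⟩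
  · exact fun x hx y hy => apply_eq_zero_of_mem_positiveGenEigenSubalgebra hδ φ β hβ hx hy
  · exact fun x hx y hy => apply_eq_zero_of_mem_positiveGenEigenSubalgebra hδ (-φ) β hβ hx hy

end LieAlgebra

namespace LinearMap.BilinForm

variable {K g : Type*} [Field K] [LieRing g] [LieAlgebra K g] [FiniteDimensional K g]
  {B ω : LinearMap.BilinForm K g}

lemma exists_derivation_apply_eq (hBnd : B.Nondegenerate)
    (hBinv : ∀ x y z : g, B ⁅x, y⁆ z = B x ⁅y, z⁆) (hωnd : ω.Nondegenerate)
    (hωskew : ∀ x y : g, ω x y = -ω y x)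
    (hωcocy : ∀ x y z : g, ω ⁅x, y⁆ z + ω ⁅y, z⁆ x + ω ⁅z, x⁆ y = 0) :
    ∃ δ : Module.End K g, Function.Injective δ ∧
      (∀ x y : g, δ ⁅x, y⁆ = ⁅δ x, y⁆ + ⁅x, δ y⁆) ∧ ∀ x y, B (δ x) y = ω x y := by
  set δ : Module.End K g := ((B.toDual hBnd).symm : Module.Dual K g →ₗ[K] g) ∘ₗ ω
  have hδ : ∀ x y, B (δ x) y = ω x y := fun x y => B.apply_toDual_symm_apply (hB := hBnd) (ω x) y
  refine ⟨δ, (B.toDual hBnd).symm.injective.comp (LinearMap.ker_eq_bot.mp hωnd.ker_eq_bot),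
    fun x y => LinearMap.ker_eq_bot.mp hBnd.ker_eq_bot (LinearMap.ext fun z => ?_), hδ⟩
  have hx : B ⁅δ x, y⁆ z = -ω ⁅y, z⁆ x := by rw [hBinv, hδ, hωskew]
  have hy : B ⁅x, δ y⁆ z = -ω ⁅z, x⁆ y := by
    rw [← lie_skew, map_neg, LinearMap.neg_apply, hBinv, hδ, ← lie_skew, map_neg, hωskew,
      neg_neg]
  rw [map_add, LinearMap.add_apply, hx, hy, hδ]
  linear_combination hωcocy x y z

end LinearMap.BilinForm

/-- Every quadratic symplectic Lie algebra `(g, B, ω)` over an algebraically closed field of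
characteristic zero admits two Lie subalgebras `U` and `V` with `g = U ⊕ V` as vector spaces,
both completely isotropic for `B` and for `ω`; i.e. `(g = U ⊕ V, B, ω)` is a special
symplectic Manin algebra. -/
theorem stmt_17 (K : Type*) [Field K] [CharZero K] [IsAlgClosed K]
    (g : Type*) [LieRing g] [LieAlgebra K g] [Module.Finite K g]
    (B ω : LinearMap.BilinForm K g)
    (hBnd : B.Nondegenerate)
    (hBsymm : ∀ x y : g, B x y = B y x)
    (hBinv : ∀ x y z : g, B ⁅x, y⁆ z = B x ⁅y, z⁆)
    (hωnd : ω.Nondegenerate)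
    (hωalt : ∀ x : g, ω x x = 0)
    (hωcocy : ∀ x y z : g, ω ⁅x, y⁆ z + ω ⁅y, z⁆ x + ω ⁅z, x⁆ y = 0) :
    ∃ U V : LieSubalgebra K g,
      IsCompl U.toSubmodule V.toSubmodule ∧
      (∀ x ∈ U, ∀ y ∈ U, B x y = 0) ∧ (∀ x ∈ V, ∀ y ∈ V, B x y = 0) ∧
      (∀ x ∈ U, ∀ y ∈ U, ω x y = 0) ∧ (∀ x ∈ V, ∀ y ∈ V, ω x y = 0) := by
  have hωskew : ∀ x y : g, ω x y = -ω y x := fun x y =>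
    (LinearMap.BilinForm.IsAlt.neg_eq hωalt y x).symm
  obtain ⟨δ, hinj, hder, hδ⟩ :=
    LinearMap.BilinForm.exists_derivation_apply_eq hBnd hBinv hωnd hωskew hωcocy
  have hBδ : ∀ x y, B (δ x) y = -B x (δ y) := fun x y => by rw [hδ, hωskew, hBsymm x, hδ]
  have hωδ : ∀ x y, ω (δ x) y = -ω x (δ y) := fun x y => by rw [← hδ, ← hδ x, hBδ]
  obtain ⟨U, V, hUV, hiso⟩ := LieAlgebra.exists_isCompl_isotropic_of_injective_derivation hder hinj
  exact ⟨U, V, hUV, (hiso B hBδ).1, (hiso B hBδ).2, (hiso ω hωδ).1, (hiso ω hωδ).2⟩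
end

section
/- Let (G = U ⊕ V, B) be a Manin algebra over a field K of characteristic 0 and let D be an invertible derivation of G, skew-symmetric with respect to B, with D(U) ⊆ U and D(V) ⊆ V (so (G = U ⊕ V, B, D) is a special symplectic Manin algebra). Suppose there exist a derivation δ of G skew-symmetric with respect to B, λ ∈ K∖{0} and c ∈ V such that [δ,D] − λδ = ad_G(c) and δ(V) ⊆ V. Let (g̃ = U' ⊕ V', T) with U' = U ⊕ Ke* and V' = V ⊕ Ke be the Manin algebra obtained as the double extension of (G,B) by the one-dimensional Lie algebra by means of δ. Then the invertible derivation D̃ of (g̃,T) defined by D̃(x) = Dx + B(c,x)e* for x in G, D̃(e*) = λe*, D̃(e) = −λe − c, is skew-symmetric with respect to T and satisfies D̃(U') ⊆ U' and D̃(V') ⊆ V'; consequently (g̃ = U' ⊕ V', T, D̃) is a special symplectic Manin algebra. -/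
/-- Special double extension of a special symplectic Manin algebra `(G = U ⊕ V, B, D)` by
means of `(δ, c)`, where `δ` is a skew-symmetric derivation with `δ(V) ⊆ V`, `λ ≠ 0`, `c ∈ V`
and `[δ,D] - λδ = ad c`: on the double extension `g̃ = K e ⊕ G ⊕ K e*` (modelled as
`K × G × K`, with bracket `br` and scalar product `T`, `U' = U ⊕ K e*` the elements
`(0, u, t)` and `V' = V ⊕ K e` the elements `(s, v, 0)`), the derivation `D̃` given by
`D̃ x = D x + B(c,x) e*` on `G`, `D̃ e* = λ e*`, `D̃ e = -λ e - c` is invertible,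
skew-symmetric with respect to `T`, and preserves `U'` and `V'`; hence
`(g̃ = U' ⊕ V', T, D̃)` is a special symplectic Manin algebra. -/
theorem stmt_18 (K : Type*) [Field K] [CharZero K]
    (G : Type*) [LieRing G] [LieAlgebra K G] [Module.Finite K G]
    (B : LinearMap.BilinForm K G)
    (hBnd : B.Nondegenerate)
    (hBsymm : ∀ x y : G, B x y = B y x)
    (hBinv : ∀ x y z : G, B ⁅x, y⁆ z = B x ⁅y, z⁆)
    (U V : LieSubalgebra K G)
    (hUV : IsCompl U.toSubmodule V.toSubmodule)
    (hUiso : ∀ x ∈ U, ∀ y ∈ U, B x y = 0)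
    (hViso : ∀ x ∈ V, ∀ y ∈ V, B x y = 0)
    (D : G →ₗ[K] G) (hDbij : Function.Bijective D)
    (hDder : ∀ x y : G, D ⁅x, y⁆ = ⁅D x, y⁆ + ⁅x, D y⁆)
    (hDskew : ∀ x y : G, B (D x) y = - B x (D y))
    (hDU : ∀ x ∈ U, D x ∈ U) (hDV : ∀ x ∈ V, D x ∈ V)
    (δ : G →ₗ[K] G)
    (hδder : ∀ x y : G, δ ⁅x, y⁆ = ⁅δ x, y⁆ + ⁅x, δ y⁆)
    (hδskew : ∀ x y : G, B (δ x) y = - B x (δ y))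
    (hδV : ∀ x ∈ V, δ x ∈ V)
    (lam : K) (hlam : lam ≠ 0) (c : G) (hcV : c ∈ V)
    (hcomm : ∀ x : G, δ (D x) - D (δ x) - lam • δ x = ⁅c, x⁆)
    (br : K × G × K → K × G × K → K × G × K)
    (hbr : ∀ p q : K × G × K, br p q =
      (0, ⁅p.2.1, q.2.1⁆ + p.1 • δ q.2.1 - q.1 • δ p.2.1, B (δ p.2.1) q.2.1))
    (T : K × G × K → K × G × K → K)
    (hT : ∀ p q : K × G × K, T p q = B p.2.1 q.2.1 + p.1 * q.2.2 + q.1 * p.2.2) :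
    ∃ Dt : (K × G × K) →ₗ[K] (K × G × K),
      (∀ p : K × G × K,
        Dt p = (-(lam * p.1), D p.2.1 - p.1 • c, B c p.2.1 + lam * p.2.2)) ∧
      Function.Bijective Dt ∧
      (∀ p q : K × G × K, Dt (br p q) = br (Dt p) q + br p (Dt q)) ∧
      (∀ p q : K × G × K, T (Dt p) q = - T p (Dt q)) ∧
      (∀ p : K × G × K, p.1 = 0 → p.2.1 ∈ U → ((Dt p).1 = 0 ∧ (Dt p).2.1 ∈ U)) ∧
      (∀ p : K × G × K, p.2.2 = 0 → p.2.1 ∈ V → ((Dt p).2.2 = 0 ∧ (Dt p).2.1 ∈ V)) := by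
  
  classical
  set Dt : (K × G × K) →ₗ[K] (K × G × K) :=
    { toFun := fun p => (-(lam * p.1), D p.2.1 - p.1 • c, B c p.2.1 + lam * p.2.2)
      map_add' := by
        intro p q
        refine Prod.ext ?_ (Prod.ext ?_ ?_) <;>
          simp only [Prod.fst_add, Prod.snd_add, map_add, add_smul, Prod.mk_add_mk]
        · ring
        · abel
        · ring
      map_smul' := by
        intro a p
        refine Prod.ext ?_ (Prod.ext ?_ ?_) <;>
          simp only [Prod.smul_fst, Prod.smul_snd, map_smul, smul_eq_mul, mul_smul,
            smul_sub, Prod.smul_mk, RingHom.id_apply] <;>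
          first | ring | rfl } with hDt
  have hDtapp : ∀ p : K × G × K,
      Dt p = (-(lam * p.1), D p.2.1 - p.1 • c, B c p.2.1 + lam * p.2.2) := fun p => rfl
  have hinj : Function.Injective Dt := by
    rw [injective_iff_map_eq_zero]
    intro p hp
    rw [hDtapp, Prod.ext_iff, Prod.ext_iff] at hp
    obtain ⟨h1, h2, h3⟩ := hp
    simp only [Prod.fst_zero, Prod.snd_zero, neg_eq_zero, mul_eq_zero] at h1 h2 h3
    have hp1 : p.1 = 0 := h1.resolve_left hlam
    rw [hp1, zero_smul, sub_zero] at h2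
    have hp2 : p.2.1 = 0 := hDbij.1 (by simpa using h2)
    rw [hp2, map_zero, zero_add] at h3
    have hp3 : p.2.2 = 0 := by
      rcases mul_eq_zero.mp h3 with h | h
      · exact absurd h hlam
      · exact h
    exact Prod.ext hp1 (Prod.ext hp2 hp3)
  refine ⟨Dt, hDtapp, ⟨hinj, LinearMap.injective_iff_surjective.mp hinj⟩, ?_, ?_, ?_, ?_⟩
  · -- derivation
    intro p q
    simp only [hbr, hDtapp]
    refine Prod.ext (by simp) (Prod.ext ?_ ?_)
    · show D (⁅p.2.1, q.2.1⁆ + p.1 • δ q.2.1 - q.1 • δ p.2.1) - (0:K) • c = _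
      have key : ∀ x : G, D (δ x) = δ (D x) - lam • δ x - ⁅c, x⁆ := fun x => by
        rw [← hcomm x]; abel
      have hsk : ⁅p.2.1, c⁆ = -⁅c, p.2.1⁆ := by rw [← lie_skew]
      simp only [map_sub, map_add, map_smul, hDder, key, lie_sub, sub_lie, lie_smul,
        smul_lie, zero_smul, sub_zero, hsk, Prod.mk_add_mk]
      module
    · show B c (⁅p.2.1, q.2.1⁆ + p.1 • δ q.2.1 - q.1 • δ p.2.1) + lam * B (δ p.2.1) q.2.1 = _
      show _ = B (δ (D p.2.1 - p.1 • c)) q.2.1 + B (δ p.2.1) (D q.2.1 - q.1 • c)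
      have h1 : B (δ p.2.1) (D q.2.1) = - B (D (δ p.2.1)) q.2.1 := by
        rw [hDskew]; ring_nf
      have hDδp : D (δ p.2.1) = δ (D p.2.1) - lam • δ p.2.1 - ⁅c, p.2.1⁆ := by
        rw [← hcomm p.2.1]; abel
      have h2 : B ⁅c, p.2.1⁆ q.2.1 = B c ⁅p.2.1, q.2.1⁆ := hBinv _ _ _
      have h3 : B (δ c) q.2.1 = - B c (δ q.2.1) := hδskew _ _
      have h4 : B (δ p.2.1) c = B c (δ p.2.1) := hBsymm _ _
      simp only [map_add, map_sub, map_smul, LinearMap.add_apply, LinearMap.sub_apply,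
        LinearMap.smul_apply, smul_eq_mul, h1, hDδp, h2, h3, h4]
      ring
  · -- skew-symmetry
    intro p q
    rw [hT, hT, hDtapp, hDtapp]
    simp only [map_sub, map_smul, LinearMap.sub_apply, LinearMap.smul_apply, smul_eq_mul]
    rw [hDskew p.2.1 q.2.1, hBsymm p.2.1 c]
    ring
  · intro p h1 h2
    rw [hDtapp]
    exact ⟨by simp [h1], by simpa [h1] using hDU _ h2⟩
  · intro p h1 h2
    rw [hDtapp]
    refine ⟨by simp [h1, hViso c hcV p.2.1 h2], ?_⟩
    exact V.toSubmodule.sub_mem (hDV _ h2) (V.toSubmodule.smul_mem _ hcV)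
end
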